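/- arXiv:2008.09905 — 8 statements merged into one kernel-verified Lean document; each statement's English description precedes it below -/
import Mathlib

section
/- Let Q be a nondegenerate binary quadratic form over F_q[u] (q odd) and let v ∈ F_q[u]² be a primitive vector (i.e. its two coordinates generate the unit ideal). If M ∈ SL₂(F_q[u]) satisfies Q((X,Y)Mᵀ) = Q(X,Y) and v M^{-T} = v, then M is the identity matrix. In other words, SL₂(F_q[u]) acts freely on primitive representations by nondegenerate quadratic forms. -/
/-- For `q` odd, `SL₂(F_q[u])` acts freely on primitive representations by nondegenerate
binary quadratic forms: if `Q` is nondegenerate, `v = (x,y)` is primitive, and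
`M ∈ SL₂(F_q[u])` satisfies `Q((X,Y)Mᵀ) = Q(X,Y)` and `v M^{-T} = v`, then `M = 1`. -/
theorem SL2_acts_freely_on_primitive_representations (F : Type*) [Field F] [Fintype F]
    (hq : Odd (Fintype.card F)) (a b c : Polynomial F)
    (hnd : ¬ ∃ e : Polynomial F, Polynomial.C ((4 : F)⁻¹) * b ^ 2 - a * c = e ^ 2)
    (x y : Polynomial F) (hprim : IsCoprime x y)
    (M : Matrix (Fin 2) (Fin 2) (Polynomial F)) (hdet : M.det = 1)
    (hform : ∀ X Y : Polynomial F,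
        a * (M 0 0 * X + M 0 1 * Y) ^ 2 +
            b * (M 0 0 * X + M 0 1 * Y) * (M 1 0 * X + M 1 1 * Y) +
            c * (M 1 0 * X + M 1 1 * Y) ^ 2 =
          a * X ^ 2 + b * X * Y + c * Y ^ 2)
    (hvec : M 1 1 * x - M 0 1 * y = x ∧ -(M 1 0) * x + M 0 0 * y = y) :
    M = 1 := by
  -- characteristic is not 2
  have h2F : (2 : F) ≠ 0 := by
    intro h
    have hchar : ringChar F = 2 := by
      have hdvd : ringChar F ∣ 2 := ringChar.dvd (by exact_mod_cast h)
      exact ((Nat.dvd_prime Nat.prime_two).mp hdvd).resolve_left CharP.ringChar_ne_one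
    have := FiniteField.even_card_of_char_two hchar
    have := Nat.odd_iff.mp hq
    omega
  have h2 : (2 : Polynomial F) ≠ 0 := by
    intro h
    apply h2F
    have := congrArg (Polynomial.eval 0) h
    simpa using this
  have h4F : (4 : F) ≠ 0 := by
    intro h
    apply h2F
    have h22 : (2 : F) * 2 = 0 := by rw [← h]; norm_num
    rcases mul_eq_zero.mp h22 with h' | h' <;> exact h'
  have h4 : (Polynomial.C ((4 : F)⁻¹)) * (4 : Polynomial F) = 1 := by
    have h4C : ((4 : Polynomial F)) = Polynomial.C (4 : F) := (map_ofNat Polynomial.C 4).symm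
    rw [h4C, ← Polynomial.C_mul, inv_mul_cancel₀ h4F, Polynomial.C_1]
  rw [Matrix.det_fin_two] at hdet
  obtain ⟨hv1, hv2⟩ := hvec
  by_cases hx : x = 0
  · -- x = 0 : y is a unit
    have hy : y ≠ 0 := (isCoprime_zero_left.mp (hx ▸ hprim)).ne_zero
    have e01 : M 0 1 = 0 := by
      have h0 : M 0 1 * y = 0 := by rw [hx] at hv1; linear_combination -hv1
      exact (mul_eq_zero.mp h0).resolve_right hy
    have e00 : M 0 0 = 1 := by
      have h0 : (M 0 0 - 1) * y = 0 := by rw [hx] at hv2; linear_combination hv2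
      have := (mul_eq_zero.mp h0).resolve_right hy
      linear_combination this
    have e11 : M 1 1 = 1 := by
      rw [e00, e01] at hdet; linear_combination hdet
    have h1 := hform 1 0
    have h3 := hform 1 1
    have h2' := hform 0 1
    rw [e00, e01, e11] at h1 h3 h2'
    have hcm : (2 : Polynomial F) * (c * M 1 0) = 0 := by
      linear_combination h3 - h1 - h2'
    have hcm0 : c * M 1 0 = 0 := (mul_eq_zero.mp hcm).resolve_left h2
    have hbm : M 1 0 * (b + c * M 1 0) = 0 := by linear_combination h1
    by_cases hm10 : M 1 0 = 0
    · ext i j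
      fin_cases i <;> fin_cases j <;>
        simp [e00, e01, e11, hm10, Matrix.one_apply]
    · exfalso
      have hc : c = 0 := (mul_eq_zero.mp hcm0).resolve_right hm10
      have hb : b = 0 := by
        have := (mul_eq_zero.mp hbm).resolve_left hm10
        rw [hc] at this
        linear_combination this
      exact hnd ⟨0, by rw [hb, hc]; ring⟩
  · by_cases hy : y = 0
    · -- y = 0 : x is a unit
      have hxu : x ≠ 0 := hx
      have e10 : M 1 0 = 0 := by
        have h0 : M 1 0 * x = 0 := by rw [hy] at hv2; linear_combination -hv2
        exact (mul_eq_zero.mp h0).resolve_right hxu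
      have e11 : M 1 1 = 1 := by
        have h0 : (M 1 1 - 1) * x = 0 := by rw [hy] at hv1; linear_combination hv1
        have := (mul_eq_zero.mp h0).resolve_right hxu
        linear_combination this
      have e00 : M 0 0 = 1 := by
        rw [e10, e11] at hdet; linear_combination hdet
      have h1 := hform 1 0
      have h3 := hform 1 1
      have h2' := hform 0 1
      rw [e00, e10, e11] at h1 h3 h2'
      have ham : (2 : Polynomial F) * (a * M 0 1) = 0 := by
        linear_combination h3 - h1 - h2'
      have ham0 : a * M 0 1 = 0 := (mul_eq_zero.mp ham).resolve_left h2
      have hbm : M 0 1 * (b + a * M 0 1) = 0 := by linear_combination h2'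
      by_cases hm01 : M 0 1 = 0
      · ext i j
        fin_cases i <;> fin_cases j <;>
          simp [e00, e10, e11, hm01, Matrix.one_apply]
      · exfalso
        have ha : a = 0 := (mul_eq_zero.mp ham0).resolve_right hm01
        have hb : b = 0 := by
          have := (mul_eq_zero.mp hbm).resolve_left hm01
          rw [ha] at this
          linear_combination this
        exact hnd ⟨Polynomial.C ((2 : F)⁻¹) * b, by
          rw [hb, ha]; ring⟩
    · -- main case : x ≠ 0, y ≠ 0
      -- extract the unipotent parameter t
      obtain ⟨s, hs⟩ : x ∣ M 0 1 :=
        hprim.dvd_of_dvd_mul_right ⟨M 1 1 - 1, by linear_combination -hv1⟩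
      have e11' : M 1 1 = 1 + s * y := by
        have h0 : x * (M 1 1 - 1 - s * y) = 0 := by
          rw [hs] at hv1; linear_combination hv1
        have := (mul_eq_zero.mp h0).resolve_left hx
        linear_combination this
      obtain ⟨r, hr⟩ : y ∣ M 1 0 :=
        hprim.symm.dvd_of_dvd_mul_right ⟨M 0 0 - 1, by linear_combination -hv2⟩
      have e00' : M 0 0 = 1 + r * x := by
        have h0 : y * (M 0 0 - 1 - r * x) = 0 := by
          rw [hr] at hv2; linear_combination hv2
        have := (mul_eq_zero.mp h0).resolve_left hy
        linear_combination this
      have hrs : r * x + s * y = 0 := by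
        rw [e00', e11', hs, hr] at hdet
        linear_combination hdet
      obtain ⟨w, hw⟩ : x ∣ s := hprim.dvd_of_dvd_mul_right ⟨-r, by linear_combination hrs⟩
      have hrw : r = -(w * y) := by
        have h0 : x * (r + w * y) = 0 := by rw [hw] at hrs; linear_combination hrs
        have := (mul_eq_zero.mp h0).resolve_left hx
        linear_combination this
      set t : Polynomial F := -w with ht_def
      have e00 : M 0 0 = 1 + x * y * t := by rw [e00', hrw]; ring
      have e01 : M 0 1 = -(x ^ 2 * t) := by rw [hs, hw]; ring
      have e10 : M 1 0 = y ^ 2 * t := by rw [hr, hrw]; ring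
      have e11 : M 1 1 = 1 - x * y * t := by rw [e11', hw]; ring
      by_cases ht : t = 0
      · ext i j
        fin_cases i <;> fin_cases j <;>
          simp [e00, e01, e10, e11, ht, Matrix.one_apply]
      · exfalso
        have h1 := hform 1 0
        have h2' := hform 0 1
        have h3 := hform 1 1
        rw [e00, e01, e10, e11] at h1 h2' h3
        have hA0 : t * (y * (2 * a * x + b * y +
            t * (y * (a * x ^ 2 + b * x * y + c * y ^ 2)))) = 0 := by
          linear_combination h1
        have hA : 2 * a * x + b * y +
            t * (y * (a * x ^ 2 + b * x * y + c * y ^ 2)) = 0 :=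
          ((mul_eq_zero.mp ((mul_eq_zero.mp hA0).resolve_left ht)).resolve_left hy)
        have hB0 : t * (x * (-(b * x) - 2 * c * y +
            t * (x * (a * x ^ 2 + b * x * y + c * y ^ 2)))) = 0 := by
          linear_combination h2'
        have hB : -(b * x) - 2 * c * y +
            t * (x * (a * x ^ 2 + b * x * y + c * y ^ 2)) = 0 :=
          ((mul_eq_zero.mp ((mul_eq_zero.mp hB0).resolve_left ht)).resolve_left hx)
        have hC0 : t * ((2 : Polynomial F) * (c * y ^ 2 - a * x ^ 2 -
            t * (x * y * (a * x ^ 2 + b * x * y + c * y ^ 2)))) = 0 := by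
          linear_combination h3 - h1 - h2'
        have hC : c * y ^ 2 - a * x ^ 2 -
            t * (x * y * (a * x ^ 2 + b * x * y + c * y ^ 2)) = 0 :=
          ((mul_eq_zero.mp ((mul_eq_zero.mp hC0).resolve_left ht)).resolve_left h2)
        have hQ : a * x ^ 2 + b * x * y + c * y ^ 2 = 0 := by
          linear_combination x * hA + hC
        have hA' : 2 * a * x + b * y = 0 := by
          linear_combination hA - t * y * hQ
        have hB' : b * x + 2 * c * y = 0 := by
          linear_combination t * x * hQ - hB
        have hd0 : x * (y * (b ^ 2 - 4 * (a * c))) = 0 := by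
          linear_combination (b * x) * hA' - (2 * a * x) * hB'
        have hdd : b ^ 2 - 4 * (a * c) = 0 :=
          ((mul_eq_zero.mp ((mul_eq_zero.mp hd0).resolve_left hx)).resolve_left hy)
        exact hnd ⟨0, by
          linear_combination Polynomial.C ((4 : F)⁻¹) * hdd + (a * c) * h4⟩
end

section
/- Let q be odd, let A ∈ F_q[u] be nonzero, and let D ∈ F_q[u] with -D not a square in F_q[u]. Then every solution f of the congruence T² + D ≡ 0 (mod A) arises as the associated solution to some primitive representation of A by a binary quadratic form of discriminant D. Concretely, the form Q(X,Y) = AX² + 2fXY + ((f²+D)/A)Y² has discriminant D, satisfies Q(1,0) = A, and has associated solution f. -/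
/-- For `q` odd, `A ∈ F_q[u]` nonzero and `D` with `-D` not a square, every solution `f`
of `T² + D ≡ 0 (mod A)` arises from the primitive representation `(Q,(1,0))` of `A` by
the quadratic form `Q(X,Y) = AX² + 2fXY + ((f²+D)/A)Y²`, which has discriminant `D`, is
nondegenerate, satisfies `Q(1,0) = A`, and has associated solution `(2f)/2 = f`. -/
theorem every_solution_arises_from_representation (F : Type*) [Field F] [Fintype F]
    (hq : Odd (Fintype.card F)) (A D f : Polynomial F) (hA : A ≠ 0)
    (hD : ¬ ∃ e : Polynomial F, -D = e ^ 2) (hf : A ∣ f ^ 2 + D) :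
    ∃ b c : Polynomial F,
      b = 2 * f ∧
      f ^ 2 + D = A * c ∧
      A * c - Polynomial.C ((4 : F)⁻¹) * b ^ 2 = D ∧
      (¬ ∃ e : Polynomial F, Polynomial.C ((4 : F)⁻¹) * b ^ 2 - A * c = e ^ 2) ∧
      Polynomial.C ((2 : F)⁻¹) * b = f := by
  have h2 : (2 : F) ≠ 0 := by
    intro h
    have hchar : ringChar F = 2 := by
      have h2' := CharP.charP_iff_prime_eq_zero (p := 2) (R := F) Nat.prime_two |>.mpr (by exact_mod_cast h)
      exact ringChar.eq F 2
    have h1 := FiniteField.even_card_of_char_two hchar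
    have h2'' := Nat.odd_iff.mp hq
    omega
  have h4 : (4 : F) ≠ 0 := by
    have : (4 : F) = 2 * 2 := by norm_num
    rw [this]
    exact mul_ne_zero h2 h2
  obtain ⟨c, hc⟩ := hf
  have key : Polynomial.C ((4 : F)⁻¹) * (2 * f) ^ 2 = f ^ 2 := by
    have : ((2 : Polynomial F)) = Polynomial.C (2 : F) := by rw [show ((2:F)) = ((2:ℕ):F) by norm_num, Polynomial.C_eq_natCast]; norm_num
    rw [mul_pow, this, ← Polynomial.C_pow, ← mul_assoc, ← Polynomial.C_mul]
    norm_num [inv_mul_cancel₀ h4]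
  refine ⟨2 * f, c, rfl, hc, ?_, ?_, ?_⟩
  · rw [key, ← hc]; ring
  · rintro ⟨e, he⟩
    apply hD
    refine ⟨e, ?_⟩
    rw [← he, key, ← hc]; ring
  · have : ((2 : Polynomial F)) = Polynomial.C (2 : F) := by rw [show ((2:F)) = ((2:ℕ):F) by norm_num, Polynomial.C_eq_natCast]; norm_num
    rw [this, ← mul_assoc, ← Polynomial.C_mul, inv_mul_cancel₀ h2]
    simp
end

section
/- Let q be odd and let A ∈ F_q[u]. Two representations (Q,(1,0)) and (Q',(1,0)) of A by nondegenerate binary quadratic forms of the same discriminant D have the same associated solution of T² + D ≡ 0 (mod A) if and only if they are equivalent under the action of SL₂(F_q[u]). -/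
/-- For `q` odd, two representations `(Q,(1,0))` and `(Q',(1,0))` of `A` by nondegenerate
binary quadratic forms `Q = AX² + bXY + cY²`, `Q' = AX² + b'XY + c'Y²` of the same
discriminant `D` have the same associated solution `b/2 ≡ b'/2 (mod A)` of
`T² + D ≡ 0 (mod A)` if and only if they are equivalent under `SL₂(F_q[u])`. -/
theorem same_associated_solution_iff_equivalent (F : Type*) [Field F] [Fintype F]
    (hq : Odd (Fintype.card F)) (A b c b' c' D : Polynomial F)
    (hD : ¬ ∃ e : Polynomial F, -D = e ^ 2)
    (h1 : A * c - Polynomial.C ((4 : F)⁻¹) * b ^ 2 = D)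
    (h2 : A * c' - Polynomial.C ((4 : F)⁻¹) * b' ^ 2 = D) :
    (A ∣ (Polynomial.C ((2 : F)⁻¹) * b - Polynomial.C ((2 : F)⁻¹) * b')) ↔
      ∃ M : Matrix (Fin 2) (Fin 2) (Polynomial F),
        M.det = 1 ∧ M 1 1 = 1 ∧ M 1 0 = 0 ∧
        ∀ x y : Polynomial F,
          A * x ^ 2 + b' * x * y + c' * y ^ 2 =
            A * (M 0 0 * x + M 0 1 * y) ^ 2 +
              b * (M 0 0 * x + M 0 1 * y) * (M 1 0 * x + M 1 1 * y) +
              c * (M 1 0 * x + M 1 1 * y) ^ 2 := by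
  have hchar : ringChar F ≠ 2 := fun h =>
    (Nat.not_even_iff_odd.mpr hq) (Nat.even_iff.mpr ((FiniteField.even_card_iff_char_two).mp h))
  have h2F : (2 : F) ≠ 0 := Ring.two_ne_zero hchar
  have h4F : (4 : F) ≠ 0 := by
    have : (4 : F) = 2 * 2 := by norm_num
    rw [this]; exact mul_ne_zero h2F h2F
  have hC4 : (4 : Polynomial F) = Polynomial.C (4 : F) := (map_ofNat Polynomial.C 4).symm
  have hC2 : (2 : Polynomial F) = Polynomial.C (2 : F) := (map_ofNat Polynomial.C 2).symm
  have hquarter : Polynomial.C ((4 : F)⁻¹) * 4 = (1 : Polynomial F) := by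
    rw [hC4, ← Polynomial.C_mul, inv_mul_cancel₀ h4F, Polynomial.C_1]
  have hhalf : Polynomial.C ((2 : F)⁻¹) * 2 = (1 : Polynomial F) := by
    rw [hC2, ← Polynomial.C_mul, inv_mul_cancel₀ h2F, Polynomial.C_1]
  have hA : A ≠ 0 := by
    intro hA0
    apply hD
    refine ⟨Polynomial.C ((2 : F)⁻¹) * b, ?_⟩
    have h14 : ((2 : F)⁻¹) * ((2 : F)⁻¹) = (4 : F)⁻¹ := by
      rw [← mul_inv]; norm_num
    rw [hA0] at h1
    calc -D = Polynomial.C ((4 : F)⁻¹) * b ^ 2 := by linear_combination h1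
      _ = (Polynomial.C ((2 : F)⁻¹) * b) ^ 2 := by
          rw [← h14, Polynomial.C_mul]; ring
  constructor
  · rintro ⟨s, hs⟩
    set t : Polynomial F := -s with ht
    have hb' : b' = b + 2 * A * t := by
      have : Polynomial.C ((2 : F)⁻¹) * b - Polynomial.C ((2 : F)⁻¹) * b' = A * s := hs
      linear_combination (-2 : Polynomial F) * this + (b - b') * hhalf
    have hc'key : A * c' = A * (c + b * t + A * t ^ 2) := by
      linear_combination h2 - h1 +
        (Polynomial.C ((4 : F)⁻¹) * (b' + b + 2 * A * t)) * hb' +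
        (A * b * t + A ^ 2 * t ^ 2) * hquarter
    have hc' : c' = c + b * t + A * t ^ 2 := mul_left_cancel₀ hA hc'key
    refine ⟨!![1, t; 0, 1], ?_, ?_, ?_, ?_⟩
    · simp [Matrix.det_fin_two_of]
    · rfl
    · rfl
    · intro x y
      show A * x ^ 2 + b' * x * y + c' * y ^ 2 =
        A * (1 * x + t * y) ^ 2 + b * (1 * x + t * y) * (0 * x + 1 * y) +
          c * (0 * x + 1 * y) ^ 2
      linear_combination (x * y) * hb' + (y ^ 2) * hc'
  · rintro ⟨M, hdet, h11, h10, hQ⟩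
    rw [Matrix.det_fin_two, h10, h11] at hdet
    have hM00 : M 0 0 = 1 := by linear_combination hdet
    set t : Polynomial F := M 0 1 with ht
    have e0 := hQ 0 1
    have e1 := hQ 1 1
    rw [h10, h11, hM00] at e0 e1
    have hb' : b' = b + 2 * A * t := by linear_combination e1 - e0
    exact ⟨-t, by linear_combination (-(Polynomial.C ((2 : F)⁻¹))) * hb' + (-(A * t)) * hhalf⟩
end

section
/- Let Q(X,Y) = aX² + bXY + cY² be a standard definite binary quadratic form over F_q[u] (q odd). Then the short vectors of Q (primitive vectors minimizing deg Q(v)) are exactly F_q^× × {0} if deg a < deg c, and F_q × F_q \ {(0,0)} if deg a = deg c. In particular Q has exactly q-1 short vectors in the first case and q²-1 in the second. -/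
/-- `D ∈ F_q[u]` is definite. -/
def IsDefinitePoly {F : Type*} [Field F] (D : Polynomial F) : Prop :=
  (¬ ∃ e : Polynomial F, -D = e ^ 2) ∧
    ¬ (Even D.natDegree ∧ ∃ t : F, t ^ 2 = (-D).leadingCoeff)

/-- The value of the quadratic form `aX² + bXY + cY²` at a vector. -/
noncomputable def QFormVal {F : Type*} [Field F] (a b c : Polynomial F)
    (v : Polynomial F × Polynomial F) : Polynomial F :=
  a * v.1 ^ 2 + b * v.1 * v.2 + c * v.2 ^ 2

/-- A short vector of the quadratic form `aX² + bXY + cY²`: a primitive vector minimizing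
the degree of the value of the form over all primitive vectors. -/
def IsShortVector {F : Type*} [Field F] (a b c : Polynomial F)
    (v : Polynomial F × Polynomial F) : Prop :=
  IsCoprime v.1 v.2 ∧ ∀ w : Polynomial F × Polynomial F, IsCoprime w.1 w.2 →
    (QFormVal a b c v).degree ≤ (QFormVal a b c w).degree

/-!
For a standard definite form, `deg Q(x, y) = max (deg a + 2 deg x) (deg c + 2 deg y)`: the cross
term `b x y` has smaller degree because `deg b < deg a ≤ deg c`, and the leading terms of `a x²`
and `c y²` cannot cancel, since cancellation would make `-lc(a) lc(c)` a square with
`deg a + deg c` even, while the discriminant `a c - b²/4` has the leading term of `a c` and is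
definite. Hence every primitive vector has `deg Q ≥ deg a`, with equality at `(1, 0)`, and
`deg Q(x, y) ≤ deg a` forces `x` constant and `y` zero (if `deg a < deg c`) or constant
(if `deg a = deg c`).
-/

open Polynomial

theorem isCoprime_of_isUnit_left {R : Type*} [CommSemiring R] {x : R} (y : R) (hx : IsUnit x) :
    IsCoprime x y :=
  let ⟨u, hu⟩ := hx.exists_left_inv
  ⟨u, 0, by rw [hu, zero_mul, add_zero]⟩

namespace Polynomial

variable {F : Type*} [Field F]

theorem isCoprime_C_C_iff {s t : F} : IsCoprime (C s) (C t) ↔ ¬(s = 0 ∧ t = 0) := by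
  constructor
  · rintro h ⟨rfl, rfl⟩
    rw [map_zero, isCoprime_zero_right] at h
    exact not_isUnit_zero h
  · intro h
    rcases not_and_or.mp h with hs | ht
    · exact isCoprime_of_isUnit_left _ (isUnit_C.mpr (Ne.isUnit hs))
    · exact (isCoprime_of_isUnit_left _ (isUnit_C.mpr (Ne.isUnit ht))).symm

theorem degree_mul_sq_le_degree_iff {p z : F[X]} (hp : p ≠ 0) :
    (p * z ^ 2).degree ≤ p.degree ↔ z.degree ≤ 0 := by
  rcases eq_or_ne z 0 with rfl | hz
  · simp
  rw [degree_eq_natDegree hp, degree_eq_natDegree (mul_ne_zero hp (pow_ne_zero 2 hz)),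
    degree_eq_natDegree hz, natDegree_mul hp (pow_ne_zero 2 hz), natDegree_pow]
  norm_cast
  omega

/-- If the leading terms of `a x²` and `c y²` cancel, then `-lc(a) lc(c) = (lc(c) lc(y) / lc(x))²`,
which a definite `D` with the leading term of `a c` forbids. -/
theorem leadingCoeff_mul_sq_add_ne_zero {D a c x y : F[X]} (hdef : IsDefinitePoly D)
    (hD : D.natDegree = a.natDegree + c.natDegree)
    (hlc : D.leadingCoeff = a.leadingCoeff * c.leadingCoeff)
    (ha : a ≠ 0) (hc : c ≠ 0) (hx : x ≠ 0) (hy : y ≠ 0)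
    (hdeg : (a * x ^ 2).natDegree = (c * y ^ 2).natDegree) :
    (a * x ^ 2).leadingCoeff + (c * y ^ 2).leadingCoeff ≠ 0 := by
  intro hzero
  refine hdef.2 ⟨?_, c.leadingCoeff * y.leadingCoeff / x.leadingCoeff, ?_⟩
  · rw [natDegree_mul ha (pow_ne_zero 2 hx), natDegree_mul hc (pow_ne_zero 2 hy),
      natDegree_pow, natDegree_pow] at hdeg
    rw [hD, Nat.even_iff]
    omega
  · rw [leadingCoeff_mul, leadingCoeff_pow, leadingCoeff_mul, leadingCoeff_pow] at hzero
    have hlx : x.leadingCoeff ≠ 0 := leadingCoeff_ne_zero.mpr hx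
    rw [leadingCoeff_neg, hlc]
    field_simp
    linear_combination c.leadingCoeff * hzero

variable {a b c : F[X]}

theorem degree_C_mul_sq_lt_degree_mul (k : F) (hca : a.degree ≤ c.degree)
    (hba : b.degree < a.degree) : (C k * b ^ 2).degree < (a * c).degree := by
  have ha := ne_zero_of_degree_gt hba
  have hc := ne_zero_of_degree_gt (hba.trans_le hca)
  rcases eq_or_ne b 0 with rfl | hb
  · rw [zero_pow two_ne_zero, mul_zero, degree_zero, bot_lt_iff_ne_bot, degree_ne_bot]
    exact mul_ne_zero ha hc
  refine degree_lt_degree ?_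
  have hCb := natDegree_C_mul_le k (b ^ 2)
  have hb_lt := natDegree_lt_natDegree hb hba
  have hac := natDegree_le_natDegree hca
  rw [natDegree_pow] at hCb
  rw [natDegree_mul ha hc]
  omega

theorem natDegree_mul_sub_C_mul_sq (k : F) (hca : a.degree ≤ c.degree)
    (hba : b.degree < a.degree) :
    (a * c - C k * b ^ 2).natDegree = a.natDegree + c.natDegree := by
  rw [sub_eq_add_neg, natDegree_add_eq_left_of_degree_lt
      (by rw [degree_neg]; exact degree_C_mul_sq_lt_degree_mul k hca hba),
    natDegree_mul (ne_zero_of_degree_gt hba) (ne_zero_of_degree_gt (hba.trans_le hca))]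

theorem leadingCoeff_mul_sub_C_mul_sq (k : F) (hca : a.degree ≤ c.degree)
    (hba : b.degree < a.degree) :
    (a * c - C k * b ^ 2).leadingCoeff = a.leadingCoeff * c.leadingCoeff := by
  rw [leadingCoeff_sub_of_degree_lt (degree_C_mul_sq_lt_degree_mul k hca hba), leadingCoeff_mul]

theorem degree_mul_sq_add_mul_sq {k : F} (hca : a.degree ≤ c.degree) (hba : b.degree < a.degree)
    (hdef : IsDefinitePoly (a * c - C k * b ^ 2)) (x y : F[X]) :
    (a * x ^ 2 + c * y ^ 2).degree = max (a * x ^ 2).degree (c * y ^ 2).degree := by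
  rcases lt_trichotomy (a * x ^ 2).degree (c * y ^ 2).degree with h | h | h
  · rw [degree_add_eq_right_of_degree_lt h, max_eq_right h.le]
  · have ha := ne_zero_of_degree_gt hba
    have hc := ne_zero_of_degree_gt (hba.trans_le hca)
    rcases eq_or_ne x 0 with rfl | hx
    · simp
    have hy : y ≠ 0 := by
      rintro rfl
      rw [zero_pow two_ne_zero, mul_zero, degree_zero, degree_eq_bot] at h
      exact mul_ne_zero ha (pow_ne_zero 2 hx) h
    exact degree_add_eq_of_leadingCoeff_add_ne_zero <|
      leadingCoeff_mul_sq_add_ne_zero hdef (natDegree_mul_sub_C_mul_sq _ hca hba)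
        (leadingCoeff_mul_sub_C_mul_sq _ hca hba) ha hc hx hy (natDegree_eq_of_degree_eq h)
  · rw [degree_add_eq_left_of_degree_lt h, max_eq_left h.le]

theorem degree_mul_mul_lt_max (hca : a.degree ≤ c.degree) (hba : b.degree < a.degree)
    {x y : F[X]} (hx : x ≠ 0) (hy : y ≠ 0) :
    (b * x * y).degree < max (a * x ^ 2).degree (c * y ^ 2).degree := by
  have ha := ne_zero_of_degree_gt hba
  have hc := ne_zero_of_degree_gt (hba.trans_le hca)
  rcases eq_or_ne b 0 with rfl | hb
  · rw [zero_mul, zero_mul, degree_zero]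
    exact lt_max_of_lt_left (bot_lt_iff_ne_bot.mpr (degree_ne_bot.mpr
      (mul_ne_zero ha (pow_ne_zero 2 hx))))
  have hb_lt := natDegree_lt_natDegree hb hba
  have hac := natDegree_le_natDegree hca
  have hbxy : (b * x * y).natDegree = b.natDegree + x.natDegree + y.natDegree := by
    rw [natDegree_mul (mul_ne_zero hb hx) hy, natDegree_mul hb hx]
  rcases le_total x.natDegree y.natDegree with h | h
  · refine lt_max_of_lt_right (degree_lt_degree ?_)
    rw [hbxy, natDegree_mul hc (pow_ne_zero 2 hy), natDegree_pow]
    omega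
  · refine lt_max_of_lt_left (degree_lt_degree ?_)
    rw [hbxy, natDegree_mul ha (pow_ne_zero 2 hx), natDegree_pow]
    omega

end Polynomial

section QFormVal

variable {F : Type*} [Field F] {a b c : F[X]}

theorem degree_qFormVal (hca : a.degree ≤ c.degree) (hba : b.degree < a.degree)
    (hdef : IsDefinitePoly (a * c - C ((4 : F)⁻¹) * b ^ 2)) (x y : F[X]) :
    (QFormVal a b c (x, y)).degree = max (a * x ^ 2).degree (c * y ^ 2).degree := by
  rcases eq_or_ne x 0 with rfl | hx
  · simp [QFormVal]
  rcases eq_or_ne y 0 with rfl | hy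
  · simp [QFormVal]
  have hsplit : QFormVal a b c (x, y) = (a * x ^ 2 + c * y ^ 2) + b * x * y := by
    unfold QFormVal
    ring
  rw [hsplit, degree_add_eq_left_of_degree_lt, degree_mul_sq_add_mul_sq hca hba hdef]
  rw [degree_mul_sq_add_mul_sq hca hba hdef]
  exact degree_mul_mul_lt_max hca hba hx hy

theorem degree_le_degree_qFormVal (hca : a.degree ≤ c.degree) (hba : b.degree < a.degree)
    (hdef : IsDefinitePoly (a * c - C ((4 : F)⁻¹) * b ^ 2)) {x y : F[X]} (hxy : IsCoprime x y) :
    a.degree ≤ (QFormVal a b c (x, y)).degree := by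
  rw [degree_qFormVal hca hba hdef]
  rcases eq_or_ne x 0 with rfl | hx
  · have hy : y ≠ 0 := by
      rintro rfl
      exact not_isUnit_zero (isCoprime_zero_right.mp hxy)
    exact le_max_of_le_right (hca.trans (degree_le_mul_left c (pow_ne_zero 2 hy)))
  · exact le_max_of_le_left (degree_le_mul_left a (pow_ne_zero 2 hx))

/-- The minimum over primitive vectors is `deg a`, attained at `(1, 0)`. -/
theorem isShortVector_iff_degree_qFormVal_le (hca : a.degree ≤ c.degree)
    (hba : b.degree < a.degree) (hdef : IsDefinitePoly (a * c - C ((4 : F)⁻¹) * b ^ 2))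
    {x y : F[X]} :
    IsShortVector a b c (x, y) ↔ IsCoprime x y ∧ (QFormVal a b c (x, y)).degree ≤ a.degree := by
  have hval : QFormVal a b c (1, 0) = a := by simp [QFormVal]
  constructor
  · rintro ⟨hxy, hmin⟩
    refine ⟨hxy, ?_⟩
    simpa only [hval] using hmin (1, 0) isCoprime_one_left
  · rintro ⟨hxy, hle⟩
    exact ⟨hxy, fun w hw => hle.trans (degree_le_degree_qFormVal hca hba hdef hw)⟩

theorem isShortVector_iff (hca : a.degree ≤ c.degree) (hba : b.degree < a.degree)
    (hdef : IsDefinitePoly (a * c - C ((4 : F)⁻¹) * b ^ 2)) {x y : F[X]} :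
    IsShortVector a b c (x, y) ↔ IsCoprime x y ∧ x.degree ≤ 0 ∧ (c * y ^ 2).degree ≤ a.degree := by
  rw [isShortVector_iff_degree_qFormVal_le hca hba hdef, degree_qFormVal hca hba hdef,
    max_le_iff, degree_mul_sq_le_degree_iff (ne_zero_of_degree_gt hba)]

theorem isShortVector_iff_of_degree_lt (hca : a.degree ≤ c.degree) (hba : b.degree < a.degree)
    (hdef : IsDefinitePoly (a * c - C ((4 : F)⁻¹) * b ^ 2)) (hac : a.degree < c.degree)
    (v : F[X] × F[X]) : IsShortVector a b c v ↔ ∃ t : F, t ≠ 0 ∧ v = (C t, 0) := by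
  obtain ⟨x, y⟩ := v
  have hy : (c * y ^ 2).degree ≤ a.degree ↔ y = 0 := by
    refine ⟨fun h => by_contra fun hy => ?_, by rintro rfl; simp⟩
    exact (h.trans_lt hac).not_ge (degree_le_mul_left c (pow_ne_zero 2 hy))
  rw [isShortVector_iff hca hba hdef, hy]
  constructor
  · rintro ⟨hxy, -, rfl⟩
    obtain ⟨t, ht, rfl⟩ := isUnit_iff.mp (isCoprime_zero_right.mp hxy)
    exact ⟨t, ht.ne_zero, rfl⟩
  · rintro ⟨t, ht, hv⟩
    obtain ⟨rfl, rfl⟩ := Prod.mk.inj hv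
    exact ⟨isCoprime_zero_right.mpr (isUnit_C.mpr (Ne.isUnit ht)), degree_C_le, rfl⟩

theorem isShortVector_iff_of_degree_eq (hca : a.degree ≤ c.degree) (hba : b.degree < a.degree)
    (hdef : IsDefinitePoly (a * c - C ((4 : F)⁻¹) * b ^ 2)) (hac : a.degree = c.degree)
    (v : F[X] × F[X]) :
    IsShortVector a b c v ↔ ∃ s t : F, ¬(s = 0 ∧ t = 0) ∧ v = (C s, C t) := by
  obtain ⟨x, y⟩ := v
  rw [isShortVector_iff hca hba hdef, hac,
    degree_mul_sq_le_degree_iff (ne_zero_of_degree_gt (hba.trans_le hca)),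
    degree_le_zero_iff, degree_le_zero_iff]
  constructor
  · rintro ⟨hxy, hx, hy⟩
    rw [hx, hy] at hxy
    exact ⟨_, _, isCoprime_C_C_iff.mp hxy, Prod.ext hx hy⟩
  · rintro ⟨s, t, hst, hv⟩
    obtain ⟨rfl, rfl⟩ := Prod.mk.inj hv
    refine ⟨isCoprime_C_C_iff.mpr hst, ?_, ?_⟩ <;> rw [coeff_C_zero]

end QFormVal

section Counting

variable {F : Type*} [Field F] [Fintype F]

theorem ncard_setOf_C_ne_zero_zero :
    {v : F[X] × F[X] | ∃ t : F, t ≠ 0 ∧ v = (C t, 0)}.ncard = Fintype.card F - 1 := by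
  have himage : {v : F[X] × F[X] | ∃ t : F, t ≠ 0 ∧ v = (C t, 0)} =
      (fun t : F => (C t, (0 : F[X]))) '' {0}ᶜ := by
    ext v
    simp [eq_comm]
  rw [himage, Set.ncard_image_of_injective _ fun s t hst => C_injective (Prod.mk.inj hst).1,
    Set.ncard_compl, Set.ncard_singleton, Nat.card_eq_fintype_card]

theorem ncard_setOf_C_C_ne_zero :
    {v : F[X] × F[X] | ∃ s t : F, ¬(s = 0 ∧ t = 0) ∧ v = (C s, C t)}.ncard =
      Fintype.card F ^ 2 - 1 := by
  have himage : {v : F[X] × F[X] | ∃ s t : F, ¬(s = 0 ∧ t = 0) ∧ v = (C s, C t)} =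
      Prod.map C C '' {0}ᶜ := by
    ext v
    simp [Prod.ext_iff, eq_comm]
  rw [himage, Set.ncard_image_of_injective _ (C_injective.prodMap C_injective),
    Set.ncard_compl, Set.ncard_singleton, Nat.card_eq_fintype_card, Fintype.card_prod, sq]

end Counting

theorem short_vectors_of_standard_definite_form_general (F : Type*) [Field F] [Fintype F]
    (a b c : Polynomial F)
    (hca : a.degree ≤ c.degree) (hba : b.degree < a.degree)
    (hdef : IsDefinitePoly (a * c - Polynomial.C ((4 : F)⁻¹) * b ^ 2)) :
    (a.degree < c.degree →
        {v : Polynomial F × Polynomial F | IsShortVector a b c v} =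
            {v : Polynomial F × Polynomial F | ∃ t : F, t ≠ 0 ∧ v = (Polynomial.C t, 0)} ∧
          Set.ncard {v : Polynomial F × Polynomial F | IsShortVector a b c v} =
            Fintype.card F - 1) ∧
    (a.degree = c.degree →
        {v : Polynomial F × Polynomial F | IsShortVector a b c v} =
            {v : Polynomial F × Polynomial F |
              ∃ s t : F, ¬ (s = 0 ∧ t = 0) ∧ v = (Polynomial.C s, Polynomial.C t)} ∧
          Set.ncard {v : Polynomial F × Polynomial F | IsShortVector a b c v} =
            Fintype.card F ^ 2 - 1) := by
  refine ⟨fun hac => ?_, fun hac => ?_⟩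
  · have hshort := Set.ext (isShortVector_iff_of_degree_lt hca hba hdef hac)
    exact ⟨hshort, hshort ▸ ncard_setOf_C_ne_zero_zero⟩
  · have hshort := Set.ext (isShortVector_iff_of_degree_eq hca hba hdef hac)
    exact ⟨hshort, hshort ▸ ncard_setOf_C_C_ne_zero⟩

/-- The short vectors of a standard definite binary quadratic form `aX² + bXY + cY²`
over `F_q[u]` (`q` odd) are exactly `F_q^× × {0}` if `deg a < deg c`, and
`F_q × F_q \ {(0,0)}` if `deg a = deg c`; in particular there are exactly `q - 1` short
vectors in the first case and `q² - 1` in the second. -/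
theorem short_vectors_of_standard_definite_form (F : Type*) [Field F] [Fintype F]
    (hq : Odd (Fintype.card F)) (a b c : Polynomial F)
    (hca : a.degree ≤ c.degree) (hba : b.degree < a.degree)
    (hdef : IsDefinitePoly (a * c - Polynomial.C ((4 : F)⁻¹) * b ^ 2)) :
    (a.degree < c.degree →
        {v : Polynomial F × Polynomial F | IsShortVector a b c v} =
            {v : Polynomial F × Polynomial F | ∃ t : F, t ≠ 0 ∧ v = (Polynomial.C t, 0)} ∧
          Set.ncard {v : Polynomial F × Polynomial F | IsShortVector a b c v} =
            Fintype.card F - 1) ∧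
    (a.degree = c.degree →
        {v : Polynomial F × Polynomial F | IsShortVector a b c v} =
            {v : Polynomial F × Polynomial F |
              ∃ s t : F, ¬ (s = 0 ∧ t = 0) ∧ v = (Polynomial.C s, Polynomial.C t)} ∧
          Set.ncard {v : Polynomial F × Polynomial F | IsShortVector a b c v} =
            Fintype.card F ^ 2 - 1) :=
  short_vectors_of_standard_definite_form_general F a b c hca hba hdef
end

section
/- Every valuation v on F_q[u]² is equivalent under the SL₂(F_q[u])-action to a unique standard valuation v_{γ,δ} with γ ≤ δ. -/
/-- The degree of a polynomial, as an element of `ℤ ∪ {-∞}`. -/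
noncomputable def degZ {F : Type*} [Field F] (x : Polynomial F) : WithBot ℤ :=
  x.degree.map fun n : ℕ => (n : ℤ)

/-- The standard valuation `v_{γ,δ}(x,y) = max(γ + deg x, δ + deg y)` on `F_q[u]²`. -/
noncomputable def stdVal {F : Type*} [Field F] (γ δ : ℤ) (x y : Polynomial F) : WithBot ℤ :=
  max ((γ : WithBot ℤ) + degZ x) ((δ : WithBot ℤ) + degZ y)

/-- A valuation on `F_q[u]²`: a function `w : F_q[u]² → ℤ ∪ {-∞}` with
`w(ax, ay) = deg a + w(x,y)`, `w(x₁+x₂, y₁+y₂) ≤ max(w(x₁,y₁), w(x₂,y₂))`, and bounded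
below on nonzero vectors. -/
def IsPlaneValuation {F : Type*} [Field F]
    (w : Polynomial F × Polynomial F → WithBot ℤ) : Prop :=
  (∀ a x y : Polynomial F, w (a * x, a * y) = degZ a + w (x, y)) ∧
  (∀ x₁ y₁ x₂ y₂ : Polynomial F, w (x₁ + x₂, y₁ + y₂) ≤ max (w (x₁, y₁)) (w (x₂, y₂))) ∧
  (∃ m : ℤ, ∀ x y : Polynomial F, ¬ (x = 0 ∧ y = 0) → (m : WithBot ℤ) ≤ w (x, y))

/-!
Existence is reduction theory. Let `(a, b)` be a unimodular vector of least value `γ`, and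
`(c, d)` a completion of it to a basis of determinant one of least value `δ`. In the coordinates
`x (a, b) + y (c, d)` the valuation is `v_{γ,δ}`: when `γ + deg x ≠ δ + deg y` the ultrametric
inequality is an equality, and when they agree, dividing `x` by `y` reduces to the minimality of
`δ`. Uniqueness: `γ` is the least value of `v_{γ,δ}` on nonzero vectors and `δ` the least value of
`max (v e₁) (v e₂)` over bases `(e₁, e₂)` of determinant one, and both are `SL₂`-invariant.
-/

open Polynomial

section Degree

variable {F : Type*} [Field F]

@[simp] lemma degZ_zero : degZ (0 : F[X]) = ⊥ := by simp [degZ]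

lemma degZ_of_ne_zero {p : F[X]} (hp : p ≠ 0) : degZ p = (p.natDegree : ℤ) := by
  rw [degZ, degree_eq_natDegree hp]; rfl

lemma degZ_ne_bot {p : F[X]} (hp : p ≠ 0) : degZ p ≠ ⊥ := by
  simp [degZ_of_ne_zero hp]

lemma degZ_nonneg {p : F[X]} (hp : p ≠ 0) : 0 ≤ degZ p := by
  rw [degZ_of_ne_zero hp]; exact_mod_cast p.natDegree.cast_nonneg

@[simp] lemma degZ_C {a : F} (ha : a ≠ 0) : degZ (C a) = 0 := by
  simp [degZ_of_ne_zero (C_ne_zero.mpr ha)]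

@[simp] lemma degZ_one : degZ (1 : F[X]) = 0 := by
  simpa using degZ_C (one_ne_zero : (1 : F) ≠ 0)

lemma degZ_mul (p q : F[X]) : degZ (p * q) = degZ p + degZ q := by
  rcases eq_or_ne p 0 with rfl | hp
  · simp
  rcases eq_or_ne q 0 with rfl | hq
  · simp
  rw [degZ_of_ne_zero (mul_ne_zero hp hq), degZ_of_ne_zero hp, degZ_of_ne_zero hq,
    natDegree_mul hp hq]
  norm_cast

lemma degZ_le_degZ_iff {p q : F[X]} : degZ p ≤ degZ q ↔ p.degree ≤ q.degree :=
  WithBot.map_le_iff _ (by simp)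

lemma degZ_lt_degZ_iff {p q : F[X]} : degZ p < degZ q ↔ p.degree < q.degree := by
  simp only [lt_iff_not_ge, degZ_le_degZ_iff]

end Degree

lemma WithBot.exists_least_coe_of_bdd {α : Type*} {f : α → WithBot ℤ} {S : Set α}
    (hS : S.Nonempty) (m : ℤ) (hm : ∀ a ∈ S, (m : WithBot ℤ) ≤ f a) :
    ∃ a ∈ S, ∃ n : ℤ, f a = n ∧ ∀ b ∈ S, (n : WithBot ℤ) ≤ f b := by
  have hfin : ∀ a ∈ S, ∃ n : ℤ, f a = n ∧ m ≤ n := fun a ha => WithBot.coe_le_iff.mp (hm a ha)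
  obtain ⟨a₀, ha₀⟩ := hS
  obtain ⟨n₀, hn₀, -⟩ := hfin a₀ ha₀
  obtain ⟨n, ⟨a, ha, hfa⟩, hleast⟩ := Int.exists_least_of_bdd (P := fun n => ∃ a ∈ S, f a = n)
    ⟨m, fun n ⟨a, ha, hfa⟩ => by exact_mod_cast hfa ▸ hm a ha⟩ ⟨n₀, a₀, ha₀, hn₀⟩
  refine ⟨a, ha, n, hfa, fun b hb => ?_⟩
  obtain ⟨k, hk, -⟩ := hfin b hb
  rw [hk]
  exact_mod_cast hleast k ⟨b, hb, hk⟩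

section Valuation

variable {F : Type*} [Field F] {w : F[X] × F[X] → WithBot ℤ}
  (hmul : ∀ a x y : F[X], w (a * x, a * y) = degZ a + w (x, y))
  (hadd : ∀ x₁ y₁ x₂ y₂ : F[X], w (x₁ + x₂, y₁ + y₂) ≤ max (w (x₁, y₁)) (w (x₂, y₂)))

include hmul in
lemma val_neg (x y : F[X]) : w (-x, -y) = w (x, y) := by
  have h := hmul (-1) x y
  rwa [neg_one_mul, neg_one_mul, ← C_1, ← C_neg, degZ_C (neg_ne_zero.mpr one_ne_zero),
    zero_add] at h

include hmul hadd in
lemma val_add_eq_left_of_lt {x₁ y₁ x₂ y₂ : F[X]} (h : w (x₂, y₂) < w (x₁, y₁)) :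
    w (x₁ + x₂, y₁ + y₂) = w (x₁, y₁) := by
  have hle : w (x₁, y₁) ≤ max (w (x₁ + x₂, y₁ + y₂)) (w (x₂, y₂)) := by
    simpa [val_neg hmul] using hadd (x₁ + x₂) (y₁ + y₂) (-x₂) (-y₂)
  refine le_antisymm ((hadd x₁ y₁ x₂ y₂).trans (max_le le_rfl h.le)) ?_
  exact (le_max_iff.mp hle).resolve_right h.not_ge

include hmul hadd in
lemma val_add_eq_max_of_ne {x₁ y₁ x₂ y₂ : F[X]} (h : w (x₁, y₁) ≠ w (x₂, y₂)) :
    w (x₁ + x₂, y₁ + y₂) = max (w (x₁, y₁)) (w (x₂, y₂)) := by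
  rcases h.lt_or_gt with h | h
  · rw [add_comm x₁, add_comm y₁, val_add_eq_left_of_lt hmul hadd h, max_eq_right h.le]
  · rw [val_add_eq_left_of_lt hmul hadd h, max_eq_left h.le]

section Reduced

variable {γ δ : ℤ} (hγ : w (1, 0) = γ) (hδ : w (0, 1) = δ)

include hmul hγ in
lemma val_left_eq (x : F[X]) : w (x, 0) = γ + degZ x := by
  simpa [hγ, add_comm] using hmul x 1 0

include hmul hδ in
lemma val_right_eq (y : F[X]) : w (0, y) = δ + degZ y := by
  simpa [hδ, add_comm] using hmul y 0 1

/- Write `x = q y + r` with `deg r < deg y`; then `(x, y) = y • (q, 1) + (r, 0)` and the first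
summand dominates. -/
include hmul hadd hγ hδ in
lemma val_eq_of_reduced_of_eq (hγδ : γ ≤ δ) (hred : ∀ q : F[X], (δ : WithBot ℤ) ≤ w (q, 1))
    {x y : F[X]} (hy : y ≠ 0) (h : γ + degZ x = δ + degZ y) : w (x, y) = δ + degZ y := by
  have hdeg : y.degree ≤ x.degree := by
    rw [← degZ_le_degZ_iff, ← WithBot.add_le_add_iff_left (WithBot.coe_ne_bot (a := δ)), ← h]
    gcongr
    exact_mod_cast hγδ
  set q := x / y
  set r := x % y
  have hq : (γ : WithBot ℤ) + degZ q ≤ δ := by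
    have hyq : degZ y + degZ q = degZ x := by
      rw [← degZ_mul, degZ, degZ, degree_mul, degree_add_div hy hdeg]
    rw [← WithBot.add_le_add_iff_right (degZ_ne_bot hy), ← h, ← hyq, add_assoc, add_comm (degZ q)]
  have hwq : w (q, 1) = δ := by
    refine le_antisymm ?_ (hred q)
    calc w (q, 1) = w (q + 0, 0 + 1) := by simp
      _ ≤ max (w (q, 0)) (w (0, 1)) := hadd _ _ _ _
      _ = δ := by rw [val_left_eq hmul hγ, hδ, max_eq_right hq]
  have hr : w (r, 0) < w (y * q, y * 1) := by
    rw [val_left_eq hmul hγ, hmul, hwq, add_comm (degZ y)]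
    calc (γ : WithBot ℤ) + degZ r < γ + degZ y :=
          WithBot.add_lt_add_left WithBot.coe_ne_bot (degZ_lt_degZ_iff.mpr (degree_mod_lt x hy))
      _ ≤ δ + degZ y := by gcongr; exact_mod_cast hγδ
  calc w (x, y) = w (y * q + r, y * 1 + 0) := by rw [EuclideanDomain.div_add_mod]; simp
    _ = w (y * q, y * 1) := val_add_eq_left_of_lt hmul hadd hr
    _ = δ + degZ y := by rw [hmul, hwq, add_comm]

include hmul hadd hγ hδ in
theorem eq_stdVal_of_reduced (hγδ : γ ≤ δ) (hred : ∀ q : F[X], (δ : WithBot ℤ) ≤ w (q, 1))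
    (x y : F[X]) : w (x, y) = stdVal γ δ x y := by
  rw [stdVal, ← val_left_eq hmul hγ, ← val_right_eq hmul hδ]
  by_cases h : w (x, 0) = w (0, y)
  · rcases eq_or_ne y 0 with rfl | hy
    · simp [h]
    rw [h, max_self, val_right_eq hmul hδ]
    rw [val_left_eq hmul hγ, val_right_eq hmul hδ] at h
    exact val_eq_of_reduced_of_eq hmul hadd hγ hδ hγδ hred hy h
  · simpa using val_add_eq_max_of_ne hmul hadd h

end Reduced

end Valuation

open scoped MatrixGroups

section Action

variable {R : Type*} [CommRing R]

/-- `(x, y) Mᵀ`, i.e. `M` acting on the column vector `(x, y)`. -/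
def mulPair (M : Matrix (Fin 2) (Fin 2) R) (v : R × R) : R × R :=
  (M 0 0 * v.1 + M 0 1 * v.2, M 1 0 * v.1 + M 1 1 * v.2)

@[simp] lemma mulPair_one (v : R × R) : mulPair 1 v = v := by
  simp [mulPair]

lemma mulPair_mul (M N : Matrix (Fin 2) (Fin 2) R) (v : R × R) :
    mulPair (M * N) v = mulPair M (mulPair N v) := by
  simp only [mulPair, Matrix.mul_apply, Fin.sum_univ_two, Prod.mk.injEq]
  constructor <;> ring

@[simp] lemma mulPair_zero (M : Matrix (Fin 2) (Fin 2) R) : mulPair M 0 = 0 := by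
  simp [mulPair]

lemma mulPair_inv_mulPair (M : SL(2, R)) (v : R × R) : mulPair ↑M⁻¹ (mulPair ↑M v) = v := by
  rw [← mulPair_mul, ← Matrix.SpecialLinearGroup.coe_mul, inv_mul_cancel,
    Matrix.SpecialLinearGroup.coe_one, mulPair_one]

lemma mulPair_mulPair_inv (M : SL(2, R)) (v : R × R) : mulPair ↑M (mulPair ↑M⁻¹ v) = v := by
  simpa using mulPair_inv_mulPair M⁻¹ v

def basisValues (w : R × R → WithBot ℤ) : Set (WithBot ℤ) :=
  Set.range fun N : SL(2, R) => max (w (mulPair N (1, 0))) (w (mulPair N (0, 1)))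

lemma image_compl_zero_comp_mulPair (w : R × R → WithBot ℤ) (M : SL(2, R)) :
    (w ∘ mulPair M) '' {0}ᶜ = w '' {0}ᶜ := by
  rw [Set.image_comp]
  congr 1
  ext v
  refine ⟨?_, fun hv => ⟨mulPair ↑M⁻¹ v, ?_, mulPair_mulPair_inv M v⟩⟩
  · rintro ⟨u, hu, rfl⟩ (h : mulPair _ u = 0)
    exact hu (by rw [← mulPair_inv_mulPair M u, h, mulPair_zero]; rfl)
  · rintro (h : mulPair _ v = 0)
    exact hv (by rw [← mulPair_mulPair_inv M v, h, mulPair_zero]; rfl)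

lemma basisValues_comp_mulPair (w : R × R → WithBot ℤ) (M : SL(2, R)) :
    basisValues (w ∘ mulPair M) = basisValues w := by
  have := (Equiv.mulLeft M).surjective.range_comp
    fun N : SL(2, R) => max (w (mulPair N (1, 0))) (w (mulPair N (0, 1)))
  simpa [basisValues, Function.comp_def, mulPair_mul] using this

end Action

section Standard

variable {F : Type*} [Field F] {γ δ : ℤ}

lemma isLeast_stdVal_image_compl_zero (hγδ : γ ≤ δ) :
    IsLeast (Function.uncurry (stdVal (F := F) γ δ) '' {0}ᶜ) γ := by
  refine ⟨⟨(1, 0), by simp, by simp [stdVal]⟩, ?_⟩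
  rintro _ ⟨⟨x, y⟩, hv, rfl⟩
  rcases eq_or_ne x 0 with rfl | hx
  · have hy : y ≠ 0 := by rintro rfl; exact hv rfl
    calc (γ : WithBot ℤ) ≤ δ := by exact_mod_cast hγδ
      _ ≤ δ + degZ y := le_add_of_nonneg_right (degZ_nonneg hy)
      _ ≤ _ := le_max_right _ _
  · calc (γ : WithBot ℤ) ≤ γ + degZ x := le_add_of_nonneg_right (degZ_nonneg hx)
      _ ≤ _ := le_max_left _ _

lemma eq_zero_of_stdVal_lt {x y : F[X]} (h : stdVal γ δ x y < δ) : y = 0 := by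
  by_contra hy
  refine h.not_ge (le_trans ?_ (le_max_right _ _))
  exact le_add_of_nonneg_right (degZ_nonneg hy)

lemma isLeast_basisValues_stdVal (hγδ : γ ≤ δ) :
    IsLeast (basisValues (Function.uncurry (stdVal (F := F) γ δ))) δ := by
  refine ⟨⟨1, ?_⟩, ?_⟩
  · simp [mulPair, stdVal, max_eq_right (WithBot.coe_le_coe.mpr hγδ)]
  rintro _ ⟨N, rfl⟩
  by_contra! h
  obtain ⟨h₁, h₂⟩ := max_lt_iff.mp h
  have h₁₀ : (N : Matrix (Fin 2) (Fin 2) F[X]) 1 0 = 0 :=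
    eq_zero_of_stdVal_lt (by simpa [mulPair] using h₁)
  have h₁₁ : (N : Matrix (Fin 2) (Fin 2) F[X]) 1 1 = 0 :=
    eq_zero_of_stdVal_lt (by simpa [mulPair] using h₂)
  have hdet := N.det_coe
  rw [Matrix.det_fin_two, h₁₀, h₁₁] at hdet
  simp at hdet

lemma eq_of_comp_mulPair_eq_stdVal {γ' δ' : ℤ} (hγδ : γ ≤ δ) (hγδ' : γ' ≤ δ')
    {w : F[X] × F[X] → WithBot ℤ} {M M' : SL(2, F[X])}
    (h : w ∘ mulPair M = Function.uncurry (stdVal γ δ))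
    (h' : w ∘ mulPair M' = Function.uncurry (stdVal γ' δ')) : γ = γ' ∧ δ = δ' := by
  have hγ := isLeast_stdVal_image_compl_zero (F := F) hγδ
  have hγ' := isLeast_stdVal_image_compl_zero (F := F) hγδ'
  have hδ := isLeast_basisValues_stdVal (F := F) hγδ
  have hδ' := isLeast_basisValues_stdVal (F := F) hγδ'
  rw [← h, image_compl_zero_comp_mulPair] at hγ
  rw [← h', image_compl_zero_comp_mulPair] at hγ'
  rw [← h, basisValues_comp_mulPair] at hδ
  rw [← h', basisValues_comp_mulPair] at hδ'
  exact ⟨WithBot.coe_injective (hγ.unique hγ'), WithBot.coe_injective (hδ.unique hδ')⟩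

end Standard

section Existence

variable {F : Type*} [Field F] {w : F[X] × F[X] → WithBot ℤ}

lemma val_mulPair_mul (hmul : ∀ a x y : F[X], w (a * x, a * y) = degZ a + w (x, y))
    (M : Matrix (Fin 2) (Fin 2) F[X]) (a x y : F[X]) :
    w (mulPair M (a * x, a * y)) = degZ a + w (mulPair M (x, y)) := by
  rw [← hmul]
  congr 1
  simp only [mulPair, Prod.mk.injEq]
  constructor <;> ring

lemma val_mulPair_add
    (hadd : ∀ x₁ y₁ x₂ y₂ : F[X], w (x₁ + x₂, y₁ + y₂) ≤ max (w (x₁, y₁)) (w (x₂, y₂)))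
    (M : Matrix (Fin 2) (Fin 2) F[X]) (x₁ y₁ x₂ y₂ : F[X]) :
    w (mulPair M (x₁ + x₂, y₁ + y₂)) ≤ max (w (mulPair M (x₁, y₁))) (w (mulPair M (x₂, y₂))) := by
  convert hadd _ _ _ _ using 2
  simp only [mulPair, Prod.mk.injEq]
  constructor <;> ring

/- The completions of the unimodular vector `(a, b)` to a basis of determinant one form the
coset `(-t, s) + F[X] • (a, b)`. -/
theorem exists_comp_mulPair_eq_stdVal (hw : IsPlaneValuation w) :
    ∃ (M : SL(2, F[X])) (γ δ : ℤ), γ ≤ δ ∧ w ∘ mulPair M = Function.uncurry (stdVal γ δ) := by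
  obtain ⟨hmul, hadd, m, hm⟩ := hw
  set S : Set (F[X] × F[X]) := {v | IsCoprime v.1 v.2}
  have hbdd : ∀ v ∈ S, (m : WithBot ℤ) ≤ w v := by
    rintro ⟨x, y⟩ hxy
    refine hm x y ?_
    rintro ⟨rfl, rfl⟩
    exact not_isCoprime_zero_zero hxy
  have hS : S.Nonempty := ⟨(1, 0), isCoprime_one_left⟩
  obtain ⟨⟨a, b⟩, hab, γ, hγ, hγ_le⟩ := WithBot.exists_least_coe_of_bdd hS m hbdd
  obtain ⟨s, t, hst⟩ : IsCoprime a b := hab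
  have hcompl : ∀ e : F[X], (-t + e * a, s + e * b) ∈ S :=
    fun e => ⟨-b, a, by linear_combination hst⟩
  obtain ⟨_, ⟨e, rfl⟩, δ, hδ, hδ_le⟩ := WithBot.exists_least_coe_of_bdd (f := w)
    (Set.range_nonempty fun e : F[X] => (-t + e * a, s + e * b)) m
    (Set.forall_mem_range.mpr fun e => hbdd _ (hcompl e))
  let M : SL(2, F[X]) := ⟨!![a, -t + e * a; b, s + e * b], by
    rw [Matrix.det_fin_two_of]; linear_combination hst⟩
  have hγδ : γ ≤ δ := by exact_mod_cast hδ ▸ hγ_le _ (hcompl e)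
  refine ⟨M, γ, δ, hγδ, funext fun ⟨x, y⟩ => ?_⟩
  refine eq_stdVal_of_reduced (w := w ∘ mulPair M) (val_mulPair_mul hmul M)
    (val_mulPair_add hadd M) (by simpa [M, mulPair] using hγ) (by simpa [M, mulPair] using hδ)
    hγδ (fun q => ?_) x y
  calc (δ : WithBot ℤ) ≤ w (-t + (e + q) * a, s + (e + q) * b) := hδ_le _ ⟨e + q, rfl⟩
    _ = (w ∘ mulPair M) (q, 1) := by
      simp only [Function.comp_apply]
      congr 1
      simp [mulPair, M]
      constructor <;> ring

end Existence

/-- Every valuation on `F_q[u]²` is equivalent, under the action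
`(v ⋆ M)(x,y) = v((x,y)Mᵀ)` of `SL₂(F_q[u])`, to a unique standard valuation `v_{γ,δ}`
with `γ ≤ δ`. -/
theorem valuation_equivalent_to_unique_standard (F : Type*) [Field F]
    (w : Polynomial F × Polynomial F → WithBot ℤ) (hw : IsPlaneValuation w) :
    ∃! p : ℤ × ℤ, p.1 ≤ p.2 ∧
      ∃ M : Matrix (Fin 2) (Fin 2) (Polynomial F), M.det = 1 ∧
        ∀ x y : Polynomial F,
          w (M 0 0 * x + M 0 1 * y, M 1 0 * x + M 1 1 * y) = stdVal p.1 p.2 x y := by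
  obtain ⟨M, γ, δ, hγδ, hM⟩ := exists_comp_mulPair_eq_stdVal hw
  refine ⟨(γ, δ), ⟨hγδ, M, M.det_coe, fun x y => congrFun hM (x, y)⟩, ?_⟩
  rintro ⟨γ', δ'⟩ ⟨hγδ', M', hdet, hM'⟩
  obtain ⟨rfl, rfl⟩ := eq_of_comp_mulPair_eq_stdVal hγδ' hγδ (M := ⟨M', hdet⟩)
    (funext fun v => hM' v.1 v.2) hM
  rfl
end

section
/- Let V₁, V₂ be continuous finite-dimensional ℚ̄_ℓ-representations of an inertia group I over a local field of residue characteristic p ≠ ℓ, with V₁ irreducible and V₂ irreducible of dimension 1. Then V₁ ⊗ V₂ is irreducible, and slope(V₁ ⊗ V₂) = max(slope(V₁), slope(V₂)) unless slope(V₁) = slope(V₂) and every element g of the upper-numbering ramification subgroup I^{slope(V₁)} acts on V₁ by some scalar λ and on V₂ by λ^{-1}. -/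
open scoped TensorProduct

/-- A representation is irreducible: the underlying space is nonzero and the only
invariant subspaces are `⊥` and `⊤`. -/
def RepIrreducible {k G V : Type*} [Field k] [Group G] [AddCommGroup V] [Module k V]
    (ρ : Representation k G V) : Prop :=
  Nontrivial V ∧ ∀ W : Submodule k V, (∀ g : G, ∀ v ∈ W, ρ g v ∈ W) → W = ⊥ ∨ W = ⊤

/-- The slope of a representation of an inertia group `G` with upper-numbering
ramification filtration `I`: the infimum of the `s ≥ 0` such that `I s` acts trivially. -/
noncomputable def repSlope {k G V : Type*} [Field k] [Group G] [AddCommGroup V]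
    [Module k V] (I : ℝ → Subgroup G) (ρ : Representation k G V) : ℝ :=
  sInf {s : ℝ | 0 ≤ s ∧ ∀ g ∈ I s, ∀ v : V, ρ g v = v}

/-- Let `V₁, V₂` be finite-dimensional representations of an inertia group `G` with
(decreasing) upper-numbering ramification filtration `I`, with `V₁` irreducible and `V₂`
irreducible of dimension `1`.  Then `V₁ ⊗ V₂` is irreducible, and
`slope(V₁ ⊗ V₂) = max(slope V₁, slope V₂)` unless `slope V₁ = slope V₂` and every
`g ∈ I^{slope V₁}` acts on `V₁` by a scalar `λ` and on `V₂` by `λ⁻¹`. -/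
theorem slope_of_tensor_product (k G : Type*) [Field k] [Group G]
    (I : ℝ → Subgroup G) (hI : ∀ s t : ℝ, s ≤ t → I t ≤ I s)
    (V₁ V₂ : Type*) [AddCommGroup V₁] [Module k V₁] [AddCommGroup V₂] [Module k V₂]
    [FiniteDimensional k V₁] [FiniteDimensional k V₂]
    (ρ₁ : Representation k G V₁) (ρ₂ : Representation k G V₂)
    (h₁ : RepIrreducible ρ₁) (h₂ : RepIrreducible ρ₂) (hdim : Module.finrank k V₂ = 1)
    (hne₁ : {s : ℝ | 0 ≤ s ∧ ∀ g ∈ I s, ∀ v : V₁, ρ₁ g v = v}.Nonempty)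
    (hne₂ : {s : ℝ | 0 ≤ s ∧ ∀ g ∈ I s, ∀ v : V₂, ρ₂ g v = v}.Nonempty) :
    RepIrreducible (ρ₁.tprod ρ₂) ∧
      (¬ (repSlope I ρ₁ = repSlope I ρ₂ ∧
            ∀ g ∈ I (repSlope I ρ₁), ∃ lam : k, lam ≠ 0 ∧
              (∀ v : V₁, ρ₁ g v = lam • v) ∧ (∀ w : V₂, ρ₂ g w = lam⁻¹ • w)) →
        repSlope I (ρ₁.tprod ρ₂) = max (repSlope I ρ₁) (repSlope I ρ₂)) := by
  classical
  obtain ⟨hnt₁, hirr₁⟩ := h₁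
  obtain ⟨hnt₂, hirr₂⟩ := h₂
  obtain ⟨e, he, hspan⟩ := finrank_eq_one_iff'.mp hdim
  -- the character of ρ₂
  have hinv₂ : ∀ (g : G) (w : V₂), ρ₂ g⁻¹ (ρ₂ g w) = w := by
    intro g w
    have h1 : ρ₂ g⁻¹ * ρ₂ g = 1 := by rw [← map_mul, inv_mul_cancel, map_one]
    calc ρ₂ g⁻¹ (ρ₂ g w) = (ρ₂ g⁻¹ * ρ₂ g) w := rfl
      _ = w := by rw [h1]; rfl
  have hχ : ∀ g : G, ∃ c : k, c ≠ 0 ∧ ∀ w : V₂, ρ₂ g w = c • w := by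
    intro g
    obtain ⟨c, hc⟩ := hspan (ρ₂ g e)
    refine ⟨c, ?_, ?_⟩
    · intro h0
      apply he
      have : ρ₂ g e = 0 := by rw [← hc, h0, zero_smul]
      have h2 := hinv₂ g e
      rw [this, map_zero] at h2
      exact h2.symm
    · intro w
      obtain ⟨d, hd⟩ := hspan w
      rw [← hd, map_smul, ← hc, smul_comm]
  choose χ hχ0 hχeq using hχ
  -- the linear map v ↦ v ⊗ e
  set f : V₁ →ₗ[k] V₁ ⊗[k] V₂ := (TensorProduct.mk k V₁ V₂).flip e with hf
  have hfapp : ∀ v : V₁, f v = v ⊗ₜ[k] e := fun v => rfl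
  have hfsurj : Function.Surjective f := by
    intro x
    induction x using TensorProduct.induction_on with
    | zero => exact ⟨0, by simp⟩
    | tmul v w =>
      obtain ⟨c, hc⟩ := hspan w
      exact ⟨c • v, by rw [hfapp, TensorProduct.smul_tmul, hc]⟩
    | add x y hx hy =>
      obtain ⟨v, hv⟩ := hx; obtain ⟨u, hu⟩ := hy
      exact ⟨v + u, by rw [map_add, hv, hu]⟩
  have hfr : Module.finrank k V₁ = Module.finrank k (V₁ ⊗[k] V₂) := by
    rw [Module.finrank_tensorProduct, hdim, mul_one]
  have hfinj : Function.Injective f :=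
    (LinearMap.injective_iff_surjective_of_finrank_eq_finrank hfr).mpr hfsurj
  have hntT : Nontrivial (V₁ ⊗[k] V₂) := by
    rw [← Module.finrank_pos_iff (R := k), ← hfr]
    exact Module.finrank_pos
  -- action on pure tensors v ⊗ e
  have hact : ∀ (g : G) (v : V₁), (ρ₁.tprod ρ₂) g (v ⊗ₜ[k] e) = χ g • ((ρ₁ g v) ⊗ₜ[k] e) := by
    intro g v
    rw [Representation.tprod_apply, TensorProduct.map_tmul, hχeq g e,
      TensorProduct.tmul_smul]
  -- irreducibility of the tensor product
  have hirrT : RepIrreducible (ρ₁.tprod ρ₂) := by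
    refine ⟨hntT, ?_⟩
    intro W hW
    have hW' : ∀ g : G, ∀ v ∈ W.comap f, ρ₁ g v ∈ W.comap f := by
      intro g v hv
      have h1 : (ρ₁.tprod ρ₂) g (v ⊗ₜ[k] e) ∈ W := hW g _ hv
      rw [hact] at h1
      have h2 : (ρ₁ g v) ⊗ₜ[k] e ∈ W := by
        have := W.smul_mem (χ g)⁻¹ h1
        rwa [smul_smul, inv_mul_cancel₀ (hχ0 g), one_smul] at this
      exact h2
    rcases hirr₁ _ hW' with h | h
    · left
      rw [eq_bot_iff]
      intro x hx
      obtain ⟨v, rfl⟩ := hfsurj x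
      have : v ∈ W.comap f := hx
      rw [h] at this
      simp only [Submodule.mem_bot] at this
      rw [this, map_zero]; exact Submodule.zero_mem _
    · right
      rw [eq_top_iff]
      intro x _
      obtain ⟨v, rfl⟩ := hfsurj x
      have : v ∈ W.comap f := by rw [h]; trivial
      exact this
  refine ⟨hirrT, ?_⟩
  intro hnot
  -- slope sets
  set S₁ : Set ℝ := {s : ℝ | 0 ≤ s ∧ ∀ g ∈ I s, ∀ v : V₁, ρ₁ g v = v} with hS₁
  set S₂ : Set ℝ := {s : ℝ | 0 ≤ s ∧ ∀ g ∈ I s, ∀ v : V₂, ρ₂ g v = v} with hS₂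
  set ST : Set ℝ := {s : ℝ | 0 ≤ s ∧ ∀ g ∈ I s, ∀ v : V₁ ⊗[k] V₂, (ρ₁.tprod ρ₂) g v = v}
    with hST
  have hr₁ : repSlope I ρ₁ = sInf S₁ := rfl
  have hr₂ : repSlope I ρ₂ = sInf S₂ := rfl
  have hrT : repSlope I (ρ₁.tprod ρ₂) = sInf ST := rfl
  have bdd₁ : BddBelow S₁ := ⟨0, fun x hx => hx.1⟩
  have bdd₂ : BddBelow S₂ := ⟨0, fun x hx => hx.1⟩
  have bddT : BddBelow ST := ⟨0, fun x hx => hx.1⟩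
  have hup₁ : ∀ {u t : ℝ}, u ∈ S₁ → u ≤ t → t ∈ S₁ := by
    rintro u t ⟨hu0, hu⟩ hut
    exact ⟨hu0.trans hut, fun g hg v => hu g (hI u t hut hg) v⟩
  have hup₂ : ∀ {u t : ℝ}, u ∈ S₂ → u ≤ t → t ∈ S₂ := by
    rintro u t ⟨hu0, hu⟩ hut
    exact ⟨hu0.trans hut, fun g hg v => hu g (hI u t hut hg) v⟩
  have hmem₁ : ∀ {t : ℝ}, sInf S₁ < t → t ∈ S₁ := by
    intro t ht
    obtain ⟨u, hu, hut⟩ := exists_lt_of_csInf_lt hne₁ ht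
    exact hup₁ hu hut.le
  have hmem₂ : ∀ {t : ℝ}, sInf S₂ < t → t ∈ S₂ := by
    intro t ht
    obtain ⟨u, hu, hut⟩ := exists_lt_of_csInf_lt hne₂ ht
    exact hup₂ hu hut.le
  -- trivial on both implies trivial on tensor product
  have trivT : ∀ g : G, (∀ v : V₁, ρ₁ g v = v) → (∀ w : V₂, ρ₂ g w = w) →
      ∀ x : V₁ ⊗[k] V₂, (ρ₁.tprod ρ₂) g x = x := by
    intro g hv hw x
    induction x using TensorProduct.induction_on with
    | zero => rw [map_zero]
    | tmul v w => rw [Representation.tprod_apply, TensorProduct.map_tmul, hv, hw]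
    | add x y hx hy => rw [map_add, hx, hy]
  have hmemT : ∀ {t : ℝ}, t ∈ S₁ → t ∈ S₂ → t ∈ ST := by
    rintro t ⟨ht0, ht1⟩ ⟨_, ht2⟩
    exact ⟨ht0, fun g hg x => trivT g (ht1 g hg) (ht2 g hg) x⟩
  have hneT : ST.Nonempty := by
    obtain ⟨s₁, hs₁⟩ := hne₁
    obtain ⟨s₂, hs₂⟩ := hne₂
    exact ⟨max s₁ s₂, hmemT (hup₁ hs₁ (le_max_left _ _)) (hup₂ hs₂ (le_max_right _ _))⟩
  -- upper bound: sInf ST ≤ max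
  have hle : sInf ST ≤ max (sInf S₁) (sInf S₂) := by
    refine le_of_forall_gt_imp_ge_of_dense ?_
    intro t ht
    refine csInf_le bddT (hmemT (hmem₁ ?_) (hmem₂ ?_))
    · exact lt_of_le_of_lt (le_max_left _ _) ht
    · exact lt_of_le_of_lt (le_max_right _ _) ht
  rw [hrT, hr₁, hr₂]
  refine le_antisymm hle ?_
  by_contra hcon
  push_neg at hcon
  obtain ⟨s, hsS, hs⟩ := exists_lt_of_csInf_lt hneT hcon
  -- every g in I s acts by a scalar on V₁ and by its inverse on V₂
  have hscal : ∀ g ∈ I s, ∃ μ : k, μ ≠ 0 ∧ (∀ v : V₁, ρ₁ g v = μ • v) ∧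
      (∀ w : V₂, ρ₂ g w = μ⁻¹ • w) := by
    intro g hg
    refine ⟨(χ g)⁻¹, inv_ne_zero (hχ0 g), ?_, ?_⟩
    · intro v
      have h1 : (ρ₁.tprod ρ₂) g (v ⊗ₜ[k] e) = v ⊗ₜ[k] e := hsS.2 g hg _
      rw [hact] at h1
      have h2 : f (χ g • ρ₁ g v) = f v := by
        rw [hfapp, hfapp, ← TensorProduct.smul_tmul']
        exact h1
      have h3 := hfinj h2
      conv_rhs => rw [← h3]
      rw [smul_smul, inv_mul_cancel₀ (hχ0 g), one_smul]
    · intro w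
      rw [hχeq g w, inv_inv]
  -- for t > s, triviality on V₁ and V₂ are equivalent
  have hiff : ∀ t : ℝ, s < t → (t ∈ S₁ ↔ t ∈ S₂) := by
    intro t hst
    constructor
    · rintro ⟨ht0, ht⟩
      refine ⟨ht0, fun g hg w => ?_⟩
      have hg' : g ∈ I s := hI s t hst.le hg
      obtain ⟨μ, hμ0, hμ1, hμ2⟩ := hscal g hg'
      obtain ⟨v₀, hv₀⟩ := exists_ne (0 : V₁)
      have : μ • v₀ = v₀ := by rw [← hμ1, ht g hg]
      have hμ : μ = 1 := by
        have h4 : (μ - 1) • v₀ = 0 := by rw [sub_smul, one_smul, this, sub_self]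
        rcases smul_eq_zero.mp h4 with h | h
        · exact sub_eq_zero.mp h
        · exact absurd h hv₀
      rw [hμ2, hμ, inv_one, one_smul]
    · rintro ⟨ht0, ht⟩
      refine ⟨ht0, fun g hg v => ?_⟩
      have hg' : g ∈ I s := hI s t hst.le hg
      obtain ⟨μ, hμ0, hμ1, hμ2⟩ := hscal g hg'
      obtain ⟨w₀, hw₀⟩ := exists_ne (0 : V₂)
      have : μ⁻¹ • w₀ = w₀ := by rw [← hμ2, ht g hg]
      have hμ : μ = 1 := by
        have h4 : (μ⁻¹ - 1) • w₀ = 0 := by rw [sub_smul, one_smul, this, sub_self]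
        rcases smul_eq_zero.mp h4 with h | h
        · have hinv : μ⁻¹ = 1 := sub_eq_zero.mp h
          calc μ = (μ⁻¹)⁻¹ := (inv_inv μ).symm
            _ = 1 := by rw [hinv, inv_one]
        · exact absurd h hw₀
      rw [hμ1, hμ, one_smul]
  -- both slopes are > s
  have ha : s < sInf S₁ := by
    by_contra h
    push_neg at h
    have hb : s < sInf S₂ := by
      by_contra h2
      push_neg at h2
      exact absurd hs (not_lt.mpr (max_le h h2))
    set t : ℝ := (s + sInf S₂) / 2 with htdef
    have hst : s < t := by rw [htdef]; linarith
    have htb : t < sInf S₂ := by rw [htdef]; linarith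
    have ht1 : t ∈ S₁ := hmem₁ (lt_of_le_of_lt h hst)
    have ht2 : t ∈ S₂ := (hiff t hst).mp ht1
    exact absurd (csInf_le bdd₂ ht2) (not_le.mpr htb)
  have hb : s < sInf S₂ := by
    by_contra h
    push_neg at h
    set t : ℝ := (s + sInf S₁) / 2 with htdef
    have hst : s < t := by rw [htdef]; linarith
    have htb : t < sInf S₁ := by rw [htdef]; linarith
    have ht2 : t ∈ S₂ := hmem₂ (lt_of_le_of_lt h hst)
    have ht1 : t ∈ S₁ := (hiff t hst).mpr ht2
    exact absurd (csInf_le bdd₁ ht1) (not_le.mpr htb)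
  -- hence S₁ = S₂ and the exceptional situation holds
  have hSeq : S₁ = S₂ := by
    ext t
    constructor
    · intro ht
      exact (hiff t (lt_of_lt_of_le ha (csInf_le bdd₁ ht))).mp ht
    · intro ht
      exact (hiff t (lt_of_lt_of_le hb (csInf_le bdd₂ ht))).mpr ht
  apply hnot
  constructor
  · rw [hr₁, hr₂, hSeq]
  · intro g hg
    rw [hr₁] at hg
    exact hscal g (hI s (sInf S₁) ha.le hg)
end

section
/- Let k ≥ 1, let F(u,T) = Σ_{i=0}^k a_i(u) T^i ∈ F_q[u,T] be separable of degree k in T, and let c₁ ≥ 0 ≥ c₂ be reals with deg a_i ≤ c₁ + c₂ i for all i. For r ∈ F_q[u] set F_{[r]}(u,T) = ∂F/∂u + (dr/du)·∂F/∂T. Then the resultant in T satisfies deg_u R(F, F_{[r]}) ≤ 2k c₁ + k·max(0, c₂ + deg r) - k + c₂ k². -/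
/-!
Weight the Sylvester matrix of `F` and `F_{[r]}`. With `M = max(0, c₂ + deg r)`, the
coefficient `b_j = a_j' + (j + 1) a_{j+1} r'` of `F_{[r]}` has degree at most
`M + c₁ - 1 + c₂ j`, so every entry in row `i` and column `j` has degree at most `w_i - c₂ j`
for suitable row weights `w_i`. Every term of the Leibniz expansion of the determinant then has
degree at most `Σ w_i - c₂ Σ j = n c₁ + k (M + c₁ - 1) + c₂ k n`, where `n = deg_T F_{[r]} ≤ k`.
Replacing `n` by `k` adds `(k - n)(c₁ + c₂ k)`, which is nonnegative because the leading
coefficient `a_k ≠ 0` obeys its own degree bound.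
-/

/-- The Sylvester matrix of `f` and `g`, with respect to the formal degrees `m` and `n`
(universal formula for `deg f ≤ m`, `deg g ≤ n`): `n` shifted rows of coefficients of `f`
followed by `m` shifted rows of coefficients of `g`. -/
noncomputable def sylvester {R : Type*} [CommRing R] (m n : ℕ) (f g : Polynomial R) :
    Matrix (Fin (m + n)) (Fin (m + n)) R :=
  Matrix.of fun i j =>
    if (i : ℕ) < n then
      if (i : ℕ) ≤ (j : ℕ) ∧ (j : ℕ) ≤ m + (i : ℕ) then f.coeff (m + (i : ℕ) - (j : ℕ))
      else 0
    else
      if (i : ℕ) - n ≤ (j : ℕ) ∧ (j : ℕ) ≤ n + ((i : ℕ) - n) then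
        g.coeff (n + ((i : ℕ) - n) - (j : ℕ))
      else 0

/-- The resultant `R_{m,n}(f,g)`, defined by the universal (Sylvester determinant)
formula for polynomials of degrees at most `m` and `n`. -/
noncomputable def resultantAux {R : Type*} [CommRing R] (m n : ℕ) (f g : Polynomial R) : R :=
  (sylvester m n f g).det

/-- For `F(u,T) = Σᵢ aᵢ(u) Tⁱ`, the partial derivative `∂F/∂u` (derivative of the
coefficients). -/
noncomputable def coeffDeriv {F : Type*} [Field F] (P : Polynomial (Polynomial F)) :
    Polynomial (Polynomial F) :=
  P.sum fun i a => Polynomial.C (Polynomial.derivative a) * Polynomial.X ^ i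

/-- `F_{[r]} = ∂F/∂u + (dr/du)·∂F/∂T`. -/
noncomputable def Fbracket {F : Type*} [Field F] (P : Polynomial (Polynomial F))
    (r : Polynomial F) : Polynomial (Polynomial F) :=
  coeffDeriv P + Polynomial.C (Polynomial.derivative r) * Polynomial.derivative P

open Finset

namespace Polynomial

/-- `deg p ≤ B` for a real bound `B`, the zero polynomial satisfying every bound. -/
def RealDegreeLE {R : Type*} [Semiring R] (p : R[X]) (B : ℝ) : Prop :=
  p = 0 ∨ (p.natDegree : ℝ) ≤ B

namespace RealDegreeLE

section Semiring

variable {R : Type*} [Semiring R] {p q : R[X]} {B C : ℝ}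

theorem zero (B : ℝ) : RealDegreeLE (0 : R[X]) B := Or.inl rfl

theorem of_natDegree_le (h : (p.natDegree : ℝ) ≤ B) : RealDegreeLE p B := Or.inr h

theorem mono (hp : RealDegreeLE p B) (hBC : B ≤ C) : RealDegreeLE p C :=
  hp.imp_right hBC.trans'

theorem add (hp : RealDegreeLE p B) (hq : RealDegreeLE q B) : RealDegreeLE (p + q) B := by
  rcases hp with rfl | hp
  · rwa [zero_add]
  rcases hq with rfl | hq
  · rw [add_zero]; exact of_natDegree_le hp
  refine of_natDegree_le ?_
  calc ((p + q).natDegree : ℝ) ≤ (max p.natDegree q.natDegree : ℕ) := by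
        exact_mod_cast natDegree_add_le p q
    _ ≤ B := by rw [Nat.cast_max]; exact max_le hp hq

theorem sum {ι : Type*} {s : Finset ι} {f : ι → R[X]} (h : ∀ i ∈ s, RealDegreeLE (f i) B) :
    RealDegreeLE (∑ i ∈ s, f i) B := by
  classical
  induction s using Finset.induction_on with
  | empty => exact zero B
  | insert a s ha ih =>
    rw [sum_insert ha]
    exact (h a (mem_insert_self a s)).add (ih fun i hi => h i (mem_insert_of_mem hi))

theorem smul {S : Type*} [SMulZeroClass S R] (a : S) (hp : RealDegreeLE p B) :
    RealDegreeLE (a • p) B := by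
  rcases hp with rfl | hp
  · rw [smul_zero]; exact zero B
  exact of_natDegree_le ((Nat.cast_le.mpr (natDegree_smul_le a p)).trans hp)

theorem mul (hp : RealDegreeLE p B) (hq : RealDegreeLE q C) : RealDegreeLE (p * q) (B + C) := by
  rcases hp with rfl | hp
  · rw [zero_mul]; exact zero _
  rcases hq with rfl | hq
  · rw [mul_zero]; exact zero _
  refine of_natDegree_le ?_
  calc ((p * q).natDegree : ℝ) ≤ p.natDegree + q.natDegree := by
        exact_mod_cast natDegree_mul_le
    _ ≤ B + C := add_le_add hp hq

theorem natCast (n : ℕ) : RealDegreeLE (n : R[X]) 0 :=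
  of_natDegree_le (by rw [natDegree_natCast, Nat.cast_zero])

theorem derivative (hp : RealDegreeLE p B) : RealDegreeLE (derivative p) (B - 1) := by
  by_cases hp0 : p.natDegree = 0
  · rw [derivative_of_natDegree_zero hp0]; exact zero _
  refine of_natDegree_le ?_
  have hlt := natDegree_derivative_lt hp0
  have hB : (p.natDegree : ℝ) ≤ B := hp.resolve_left (by rintro rfl; exact hp0 natDegree_zero)
  have : ((Polynomial.derivative p).natDegree : ℝ) + 1 ≤ p.natDegree := by exact_mod_cast hlt
  linarith

end Semiring

section CommRing

variable {R : Type*} [CommRing R]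

theorem prod {ι : Type*} {s : Finset ι} {f : ι → R[X]} {B : ι → ℝ}
    (h : ∀ i ∈ s, RealDegreeLE (f i) (B i)) : RealDegreeLE (∏ i ∈ s, f i) (∑ i ∈ s, B i) := by
  classical
  induction s using Finset.induction_on with
  | empty => exact of_natDegree_le (by simp)
  | insert a s ha ih =>
    rw [prod_insert ha, sum_insert ha]
    exact (h a (mem_insert_self a s)).mul (ih fun i hi => h i (mem_insert_of_mem hi))

theorem det {n : Type*} [Fintype n] [DecidableEq n] {A : Matrix n n R[X]} {a b : n → ℝ}
    (h : ∀ i j, RealDegreeLE (A i j) (a i + b j)) :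
    RealDegreeLE A.det (∑ i, a i + ∑ j, b j) := by
  rw [Matrix.det_apply]
  refine sum fun σ _ => smul _ ?_
  have hσ : ∑ i, (a (σ i) + b i) = ∑ i, a i + ∑ j, b j := by
    rw [sum_add_distrib, Equiv.sum_comp σ a]
  exact hσ ▸ prod fun i _ => h (σ i) i

end CommRing

end RealDegreeLE

end Polynomial

open Polynomial

section Resultant

variable {R : Type*} [CommRing R] {m n : ℕ} {f g : R[X][X]} {α β γ : ℝ}

/-- Entry `(i, j)` of the Sylvester matrix is a coefficient of index `m + i - j` (of `f`) or
`i - j` (of `g`), so a coefficient bound linear in the index splits into row and column weights. -/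
theorem realDegreeLE_sylvester_apply (hf : ∀ i, RealDegreeLE (f.coeff i) (α + γ * i))
    (hg : ∀ i, RealDegreeLE (g.coeff i) (β + γ * i)) (i j : Fin (m + n)) :
    RealDegreeLE (sylvester m n f g i j)
      (((if (i : ℕ) < n then α + γ * m else β) + γ * i) + -(γ * j)) := by
  unfold _root_.sylvester
  simp only [Matrix.of_apply]
  split_ifs with hi hij hij
  · refine (hf _).mono (le_of_eq ?_)
    rw [Nat.cast_sub hij.2]; push_cast; ring
  · exact RealDegreeLE.zero _
  · refine (hg _).mono (le_of_eq ?_)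
    rw [show n + ((i : ℕ) - n) - j = i - j by omega, Nat.cast_sub (by omega)]; ring
  · exact RealDegreeLE.zero _

theorem realDegreeLE_resultantAux (hf : ∀ i, RealDegreeLE (f.coeff i) (α + γ * i))
    (hg : ∀ i, RealDegreeLE (g.coeff i) (β + γ * i)) :
    RealDegreeLE (resultantAux m n f g) (n * α + m * β + γ * (m * n)) := by
  refine (RealDegreeLE.det (realDegreeLE_sylvester_apply hf hg)).mono (le_of_eq ?_)
  rw [sum_add_distrib, sum_neg_distrib, add_neg_cancel_right,
    Fin.sum_univ_eq_sum_range (fun i => if i < n then α + γ * m else β), add_comm m n,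
    sum_range_add, sum_congr rfl fun x hx => if_pos (mem_range.mp hx)]
  simp only [add_lt_iff_neg_left, not_lt_zero, if_false, sum_const, card_range, nsmul_eq_mul]
  ring

end Resultant

section Fbracket

variable {F : Type*} [Field F]

theorem coeff_coeffDeriv (P : F[X][X]) (t : ℕ) :
    (coeffDeriv P).coeff t = derivative (P.coeff t) := by
  rw [coeffDeriv, Polynomial.sum_def, finsetSum_coeff]
  simp only [coeff_C_mul_X_pow, sum_ite_eq]
  split_ifs with h
  · rfl
  · rw [notMem_support_iff.mp h, map_zero]

theorem coeff_Fbracket (P : F[X][X]) (r : F[X]) (t : ℕ) :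
    (Fbracket P r).coeff t =
      derivative (P.coeff t) + derivative r * (P.coeff (t + 1) * ((t : F[X]) + 1)) := by
  rw [Fbracket, coeff_add, coeff_coeffDeriv, coeff_C_mul, coeff_derivative]

theorem natDegree_Fbracket_le (P : F[X][X]) (r : F[X]) :
    (Fbracket P r).natDegree ≤ P.natDegree := by
  refine natDegree_le_iff_coeff_eq_zero.mpr fun t ht => ?_
  rw [coeff_Fbracket, coeff_eq_zero_of_natDegree_lt ht,
    coeff_eq_zero_of_natDegree_lt (ht.trans (Nat.lt_succ_self t))]
  simp

theorem realDegreeLE_coeff_Fbracket {P : F[X][X]} {c₁ c₂ : ℝ}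
    (hP : ∀ i, RealDegreeLE (P.coeff i) (c₁ + c₂ * i)) (r : F[X]) (t : ℕ) :
    RealDegreeLE ((Fbracket P r).coeff t) (max 0 (c₂ + r.natDegree) + c₁ - 1 + c₂ * t) := by
  have hM₀ := le_max_left 0 (c₂ + r.natDegree)
  have hM := le_max_right 0 (c₂ + r.natDegree)
  rw [coeff_Fbracket]
  refine .add ((hP t).derivative.mono (by linarith)) ?_
  have hr : RealDegreeLE r r.natDegree := .of_natDegree_le le_rfl
  have ht : RealDegreeLE ((t : F[X]) + 1) 0 := by
    rw [← Nat.cast_succ]; exact .natCast _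
  refine (hr.derivative.mul ((hP (t + 1)).mul ht)).mono ?_
  push_cast
  linarith

end Fbracket

theorem resultant_degree_bound_general (F : Type*) [Field F]
    (k : ℕ) (hk : 1 ≤ k) (P : Polynomial (Polynomial F)) (hdegT : P.natDegree = k)
    (c₁ c₂ : ℝ)
    (hcoeff : ∀ i ≤ k, P.coeff i = 0 ∨ ((P.coeff i).natDegree : ℝ) ≤ c₁ + c₂ * i)
    (r : Polynomial F) :
    resultantAux P.natDegree (Fbracket P r).natDegree P (Fbracket P r) = 0 ∨
      ((resultantAux P.natDegree (Fbracket P r).natDegree P (Fbracket P r)).natDegree : ℝ) ≤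
        2 * k * c₁ + k * max 0 (c₂ + (r.natDegree : ℝ)) - k + c₂ * k ^ 2 := by
  have hP : ∀ i, RealDegreeLE (P.coeff i) (c₁ + c₂ * i) := fun i =>
    if hi : i ≤ k then hcoeff i hi
    else by rw [coeff_eq_zero_of_natDegree_lt (by omega)]; exact .zero _
  have hlead : P.coeff k ≠ 0 := by
    rw [← hdegT, ← leadingCoeff, Ne, leadingCoeff_eq_zero]
    rintro rfl
    rw [natDegree_zero] at hdegT
    omega
  have hck : 0 ≤ c₁ + c₂ * k := ((hP k).resolve_left hlead).trans' (Nat.cast_nonneg _)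
  have hn : ((Fbracket P r).natDegree : ℝ) ≤ k := by
    exact_mod_cast hdegT ▸ natDegree_Fbracket_le P r
  refine (realDegreeLE_resultantAux hP (realDegreeLE_coeff_Fbracket hP r)).mono ?_
  rw [hdegT]
  nlinarith [mul_nonneg (sub_nonneg.mpr hn) hck]

/-- Let `F(u,T) = Σ_{i=0}^k aᵢ(u) Tⁱ ∈ F_q[u,T]` be separable of degree `k ≥ 1` in `T`,
and let `c₁ ≥ 0 ≥ c₂` be reals with `deg aᵢ ≤ c₁ + c₂ i` for all `i`.  Then for any
`r ∈ F_q[u]`, the resultant in `T` satisfies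
`deg_u R(F, F_{[r]}) ≤ 2k c₁ + k·max(0, c₂ + deg r) - k + c₂ k²`. -/
theorem resultant_degree_bound (F : Type*) [Field F] [Fintype F]
    (k : ℕ) (hk : 1 ≤ k) (P : Polynomial (Polynomial F)) (hdegT : P.natDegree = k)
    (hsep : (P.map (algebraMap (Polynomial F) (FractionRing (Polynomial F)))).Separable)
    (c₁ c₂ : ℝ) (hc₁ : 0 ≤ c₁) (hc₂ : c₂ ≤ 0)
    (hcoeff : ∀ i ≤ k, P.coeff i = 0 ∨ ((P.coeff i).natDegree : ℝ) ≤ c₁ + c₂ * i)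
    (r : Polynomial F) :
    resultantAux P.natDegree (Fbracket P r).natDegree P (Fbracket P r) = 0 ∨
      ((resultantAux P.natDegree (Fbracket P r).natDegree P (Fbracket P r)).natDegree : ℝ) ≤
        2 * k * c₁ + k * max 0 (c₂ + (r.natDegree : ℝ)) - k + c₂ * k ^ 2 :=
  resultant_degree_bound_general F k hk P hdegT c₁ c₂ hcoeff r
end

section
/- Let F(u,T) ∈ F_q[u,T] have degree k ≥ 1 in T with distinct roots α₁,…,α_k in an algebraic closure of F_q(u) (separability), and set F_v = ∂F/∂u + v·∂F/∂T ∈ F_q[u,T,v]. Then the discriminant in v of the resultant R(F, F_v) (taken in T) is a nonzero polynomial in F_q[u] if and only if the values (∂F/∂u)/(∂F/∂T)(u, α_i) for 1 ≤ i ≤ k are pairwise distinct. -/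
/-- `F`, viewed as a polynomial in `T` over `F_q[u][v]`. -/
noncomputable def liftT {F : Type*} [Field F] (P : Polynomial (Polynomial F)) :
    Polynomial (Polynomial (Polynomial F)) :=
  P.map Polynomial.C

/-- `F_v = ∂F/∂u + v·∂F/∂T`, as a polynomial in `T` over `F_q[u][v]`. -/
noncomputable def FvPoly {F : Type*} [Field F] (P : Polynomial (Polynomial F)) :
    Polynomial (Polynomial (Polynomial F)) :=
  (coeffDeriv P).map Polynomial.C +
    Polynomial.C (Polynomial.X : Polynomial (Polynomial F)) *
      (Polynomial.derivative P).map Polynomial.C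

/-- `R(F, F_v)`: the resultant in `T` of `F` and `F_v`, an element of `F_q[u][v]`
(a polynomial in `v` with coefficients in `F_q[u]`). -/
noncomputable def RFFv {F : Type*} [Field F] (P : Polynomial (Polynomial F)) :
    Polynomial (Polynomial F) :=
  resultantAux (liftT P).natDegree (FvPoly P).natDegree (liftT P) (FvPoly P)

/-- The embedding `F_q[u] ↪ closure of F_q(u)`. -/
noncomputable def embClosure (F : Type*) [Field F] :
    Polynomial F →+* AlgebraicClosure (FractionRing (Polynomial F)) :=
  (algebraMap (FractionRing (Polynomial F))
      (AlgebraicClosure (FractionRing (Polynomial F)))).comp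
    (algebraMap (Polynomial F) (FractionRing (Polynomial F)))

open Polynomial

theorem sylvester_eq_transpose_submatrix {R : Type*} [CommRing R] (m n : ℕ) (f g : R[X]) :
    _root_.sylvester m n f g =
      ((Polynomial.sylvester f g m n).submatrix Fin.rev Fin.rev).transpose := by
  ext ⟨i, hi⟩ ⟨j, hj⟩
  simp only [Matrix.transpose_apply, Matrix.submatrix_apply]
  by_cases hin : i < n
  · have hrev : Fin.rev ⟨i, hi⟩ = Fin.natAdd m ⟨n - 1 - i, by omega⟩ :=
      Fin.ext (by simp only [Fin.val_rev, Fin.natAdd_mk]; omega)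
    rw [hrev]
    simp only [_root_.sylvester, Polynomial.sylvester, Matrix.of_apply, Fin.addCases_right,
      Fin.val_rev, Set.mem_Icc, if_pos hin]
    congr 1
    · exact propext (by omega)
    · congr 1; omega
  · have hrev : Fin.rev ⟨i, hi⟩ = Fin.castAdd n ⟨m + n - 1 - i, by omega⟩ :=
      Fin.ext (by simp only [Fin.val_rev, Fin.castAdd_mk]; omega)
    rw [hrev]
    simp only [_root_.sylvester, Polynomial.sylvester, Matrix.of_apply, Fin.addCases_left,
      Fin.val_rev, Set.mem_Icc, if_neg hin]
    congr 1
    · exact propext (by omega)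
    · congr 1; omega

theorem resultantAux_eq_resultant {R : Type*} [CommRing R] (m n : ℕ) (f g : R[X]) :
    resultantAux m n f g = f.resultant g m n := by
  rw [resultantAux, sylvester_eq_transpose_submatrix, Matrix.det_transpose]
  exact Matrix.det_submatrix_equiv_self Fin.revPerm _

namespace Polynomial

variable {K : Type*} [Field K]

theorem resultant_derivative_ne_zero_iff {f : K[X]} (hf : f ≠ 0) :
    f.resultant (derivative f) f.natDegree (f.natDegree - 1) ≠ 0 ↔ f.Separable := by
  obtain ⟨k, hk⟩ : ∃ k, f.natDegree - 1 = (derivative f).natDegree + k :=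
    Nat.exists_eq_add_of_le (natDegree_derivative_le f)
  rw [hk, resultant_add_right_deg _ _ _ _ _ le_rfl, coeff_natDegree]
  simp [hf, resultant_eq_zero_iff, Separable]

theorem C_mul_prod_X_sub_C_ne_zero {c : K} (hc : c ≠ 0) (s : Multiset K) :
    C c * (s.map fun a => X - C a).prod ≠ 0 :=
  mul_ne_zero (C_ne_zero.2 hc)
    (monic_multiset_prod_of_monic _ _ fun a _ => monic_X_sub_C a).ne_zero

theorem separable_C_mul_prod_X_sub_C_iff {c : K} (hc : c ≠ 0) (s : Multiset K) :
    (C c * (s.map fun a => X - C a).prod).Separable ↔ s.Nodup := by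
  have hsplit : (C c * (s.map fun a => X - C a).prod).Splits :=
    (Splits.multisetProd (by simp [Splits.X_sub_C])).C_mul c
  rw [← nodup_roots_iff_of_splits (C_mul_prod_X_sub_C_ne_zero hc s) hsplit, roots_C_mul _ hc,
    roots_multiset_prod_X_sub_C]

theorem eval_C_map_C_add_X_mul (a b : K[X]) {α : K} (hb : b.eval α ≠ 0) :
    (a.map C + C X * b.map C).eval (C α) = C (b.eval α) * (X - C (-(a.eval α / b.eval α))) := by
  simp only [eval_add, eval_mul, eval_C, eval_map, eval₂_hom]
  rw [mul_sub, ← C_mul, mul_neg, mul_div_cancel₀ _ hb, C_neg]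
  ring

theorem exists_resultant_map_C_add_X_mul_eq {f : K[X]} (hf : f.Splits) (hf0 : f ≠ 0)
    (a b : K[X]) (hb : ∀ α ∈ f.roots, b.eval α ≠ 0) {n : ℕ}
    (hn : (a.map C + C X * b.map C).natDegree ≤ n) :
    ∃ c ≠ 0, (f.map C).resultant (a.map C + C X * b.map C) f.natDegree n =
      C c * ((f.roots.map fun α => -(a.eval α / b.eval α)).map fun v => X - C v).prod := by
  refine ⟨f.leadingCoeff ^ n * (f.roots.map b.eval).prod,
    mul_ne_zero (pow_ne_zero _ (leadingCoeff_ne_zero.2 hf0))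
      (Multiset.prod_ne_zero (by simpa using hb)), ?_⟩
  have h := resultant_eq_prod_eval (f.map C) _ n hn (hf.map C)
  rw [natDegree_map_eq_of_injective C_injective, leadingCoeff_map_of_injective C_injective,
    hf.roots_map_of_injective C_injective, Multiset.map_map, Function.comp_def,
    Multiset.map_congr rfl fun α hα => eval_C_map_C_add_X_mul a b (hb α hα)] at h
  rw [h, Multiset.prod_map_mul, map_mul, map_pow, map_multiset_prod, Multiset.map_map,
    Multiset.map_map, mul_assoc]
  rfl

end Polynomial

section

variable {F : Type*} [Field F] (P : F[X][X]) {S : Type*} [CommRing S] (φ : F[X] →+* S)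

theorem liftT_map : (liftT P).map (mapRingHom φ) = (P.map φ).map C := by
  rw [liftT, map_map, mapRingHom_comp_C, ← map_map]

theorem FvPoly_map :
    (FvPoly P).map (mapRingHom φ) =
      ((coeffDeriv P).map φ).map C + C X * ((derivative P).map φ).map C := by
  simp only [FvPoly, Polynomial.map_add, Polynomial.map_mul, map_map, mapRingHom_comp_C,
    Polynomial.map_C, coe_mapRingHom, Polynomial.map_X]

theorem RFFv_map :
    (RFFv P).map φ = ((P.map φ).map C).resultant
      (((coeffDeriv P).map φ).map C + C X * ((derivative P).map φ).map C)
      P.natDegree (FvPoly P).natDegree := by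
  change mapRingHom φ (resultantAux _ _ _ _) = _
  rw [resultantAux_eq_resultant, ← resultant_map_map, liftT_map, FvPoly_map, liftT,
    natDegree_map_eq_of_injective C_injective]

end

theorem embClosure_injective (F : Type*) [Field F] : Function.Injective (embClosure F) :=
  (algebraMap (FractionRing F[X]) _).injective.comp (IsFractionRing.injective F[X] _)

theorem discriminant_nonzero_iff_distinct_values_general (F : Type*) [Field F]
    (P : Polynomial (Polynomial F))
    (hsep : (P.map (algebraMap (Polynomial F) (FractionRing (Polynomial F)))).Separable) :
    ∀ Δ : Polynomial F,
      (RFFv P).leadingCoeff ^ (2 * (RFFv P).natDegree - 1) * Δ =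
          (-1) ^ ((RFFv P).natDegree * ((RFFv P).natDegree - 1) / 2) *
            resultantAux (RFFv P).natDegree ((RFFv P).natDegree - 1) (RFFv P)
              (Polynomial.derivative (RFFv P)) →
      (Δ ≠ 0 ↔
        ∀ α β : AlgebraicClosure (FractionRing (Polynomial F)),
          (P.map (embClosure F)).eval α = 0 → (P.map (embClosure F)).eval β = 0 → α ≠ β →
            ((coeffDeriv P).map (embClosure F)).eval α /
                ((Polynomial.derivative P).map (embClosure F)).eval α ≠
              ((coeffDeriv P).map (embClosure F)).eval β /
                ((Polynomial.derivative P).map (embClosure F)).eval β) := by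
  intro Δ hΔ
  set g := RFFv P
  set Q := P.map (embClosure F)
  have hinj := embClosure_injective F
  have hQsep : Q.Separable := by
    have := hsep.map (f := algebraMap (FractionRing F[X]) (AlgebraicClosure (FractionRing F[X])))
    rwa [map_map] at this
  have hQ0 : Q ≠ 0 := hQsep.ne_zero
  have hb : ∀ α ∈ Q.roots, ((derivative P).map (embClosure F)).eval α ≠ 0 := fun α hα => by
    rw [← derivative_map]
    exact hQsep.eval₂_derivative_ne_zero (RingHom.id _) (by simpa using (mem_roots hQ0).1 hα)
  obtain ⟨c, hc, hg⟩ := exists_resultant_map_C_add_X_mul_eq (IsAlgClosed.splits Q) hQ0 _ _ hb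
    (n := (FvPoly P).natDegree) (by rw [← FvPoly_map]; exact natDegree_map_le)
  rw [natDegree_map_eq_of_injective hinj, ← RFFv_map] at hg
  have hg0 : g.map (embClosure F) ≠ 0 := hg ▸ C_mul_prod_X_sub_C_ne_zero hc _
  have hlc : g.leadingCoeff ≠ 0 := leadingCoeff_ne_zero.2 ((Polynomial.map_ne_zero_iff hinj).1 hg0)
  rw [← mul_ne_zero_iff_left (pow_ne_zero _ hlc), hΔ,
    mul_ne_zero_iff_left (pow_ne_zero _ (neg_ne_zero.2 one_ne_zero)), resultantAux_eq_resultant,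
    ← map_ne_zero_iff _ hinj, ← resultant_map_map, ← natDegree_map_eq_of_injective hinj g,
    ← derivative_map, resultant_derivative_ne_zero_iff hg0, hg,
    separable_C_mul_prod_X_sub_C_iff hc, Multiset.nodup_map_iff_inj_on (nodup_roots hQsep)]
  simp only [mem_roots hQ0, IsRoot.def, neg_inj]
  exact ⟨fun h α β hα hβ hne heq => hne (h α hα β hβ heq),
    fun h α hα β hβ heq => by_contra fun hne => h α β hα hβ hne heq⟩

/-- Let `F(u,T) ∈ F_q[u,T]` be separable of degree `k ≥ 1` in `T`, with roots
`α₁, …, α_k` in an algebraic closure of `F_q(u)`, and `F_v = ∂F/∂u + v·∂F/∂T`.  Then the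
discriminant in `v` of the resultant `R(F,F_v)` (i.e. any `Δ ∈ F_q[u]` with
`lc^{2d-1}·Δ = (-1)^{d(d-1)/2}·R_{d,d-1}(g, dg/dv)` for `g = R(F,F_v)`, `d = deg_v g`)
is a nonzero polynomial iff the values `(∂F/∂u)/(∂F/∂T)(u, αᵢ)` are pairwise distinct. -/
theorem discriminant_nonzero_iff_distinct_values (F : Type*) [Field F] [Fintype F]
    (k : ℕ) (hk : 1 ≤ k) (P : Polynomial (Polynomial F)) (hdegT : P.natDegree = k)
    (hsep : (P.map (algebraMap (Polynomial F) (FractionRing (Polynomial F)))).Separable) :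
    ∀ Δ : Polynomial F,
      (RFFv P).leadingCoeff ^ (2 * (RFFv P).natDegree - 1) * Δ =
          (-1) ^ ((RFFv P).natDegree * ((RFFv P).natDegree - 1) / 2) *
            resultantAux (RFFv P).natDegree ((RFFv P).natDegree - 1) (RFFv P)
              (Polynomial.derivative (RFFv P)) →
      (Δ ≠ 0 ↔
        ∀ α β : AlgebraicClosure (FractionRing (Polynomial F)),
          (P.map (embClosure F)).eval α = 0 → (P.map (embClosure F)).eval β = 0 → α ≠ β →
            ((coeffDeriv P).map (embClosure F)).eval α /
                ((Polynomial.derivative P).map (embClosure F)).eval α ≠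
              ((coeffDeriv P).map (embClosure F)).eval β /
                ((Polynomial.derivative P).map (embClosure F)).eval β) :=
  discriminant_nonzero_iff_distinct_values_general F P hsep
end
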